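/- arXiv:2604.05462 — 2 statements merged into one kernel-verified Lean document; each statement's English description precedes it below -/
import Mathlib

section
/- Gram-matrix error controls aligned factor error: for V, W ∈ ℝ^{d×r} with σ_min(W) = σ_r(W) > 0, there exists an orthogonal R ∈ O(r) such that ‖VR − W‖_F ≤ ‖VVᵀ − WWᵀ‖_F / ((√2 − 1)^{1/2} σ_r(W)). -/
open Matrix Finset

/-- Squared Frobenius norm. -/
noncomputable def frobSq {m n : ℕ} (M : Matrix (Fin m) (Fin n) ℝ) : ℝ :=
  ∑ i, ∑ j, (M i j) ^ 2

/-- Frobenius norm. -/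
noncomputable def frobNorm {m n : ℕ} (M : Matrix (Fin m) (Fin n) ℝ) : ℝ :=
  Real.sqrt (frobSq M)

/-- The set of values `‖Mv‖` over unit vectors `v`. -/
noncomputable def svSet {m n : ℕ} (M : Matrix (Fin m) (Fin n) ℝ) : Set ℝ :=
  {x | ∃ v : Fin n → ℝ, (∑ j, v j ^ 2) = 1 ∧ x = Real.sqrt (∑ i, (M.mulVec v i) ^ 2)}

/-- Smallest singular value. -/
noncomputable def sigmaMin {m n : ℕ} (M : Matrix (Fin m) (Fin n) ℝ) : ℝ := sInf (svSet M)

/-! ### Auxiliary lemmas -/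

lemma frobSq_eq_trace {m n : ℕ} (M : Matrix (Fin m) (Fin n) ℝ) :
    frobSq M = (Mᵀ * M).trace := by
  unfold frobSq Matrix.trace
  rw [Finset.sum_comm]
  simp [Matrix.mul_apply, Matrix.diag, sq]

lemma frobSq_nonneg {m n : ℕ} (M : Matrix (Fin m) (Fin n) ℝ) : 0 ≤ frobSq M := by
  apply Finset.sum_nonneg; intro i _; apply Finset.sum_nonneg; intro j _; positivity

lemma frobSq_sub {m n : ℕ} (M N : Matrix (Fin m) (Fin n) ℝ) :
    frobSq (M - N) = (Mᵀ * M).trace - 2 * (Mᵀ * N).trace + (Nᵀ * N).trace := by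
  rw [frobSq_eq_trace, transpose_sub, Matrix.sub_mul, Matrix.mul_sub, Matrix.mul_sub,
    trace_sub, trace_sub, trace_sub]
  have : (Nᵀ * M).trace = (Mᵀ * N).trace := by
    rw [← Matrix.trace_transpose (Nᵀ * M), transpose_mul, transpose_transpose]
  rw [this]; ring

lemma trace4 {d r : ℕ} (A B C D : Matrix (Fin d) (Fin r) ℝ) :
    ((A * Bᵀ) * (C * Dᵀ)).trace = ((Bᵀ * C) * (Dᵀ * A)).trace := by
  have h1 : (A * Bᵀ) * (C * Dᵀ) = A * ((Bᵀ * C) * Dᵀ) := by simp only [Matrix.mul_assoc]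
  rw [h1, trace_mul_comm, Matrix.mul_assoc]

lemma trace_stdBasis_mul {r : ℕ} (i j : Fin r) (c : ℝ) (B : Matrix (Fin r) (Fin r) ℝ) :
    (Matrix.single i j c * B).trace = c * B j i := by
  unfold Matrix.trace
  rw [Finset.sum_eq_single i]
  · simp [Matrix.diag]
  · intro b _ hb
    simp [Matrix.diag, Matrix.single_mul_apply_of_ne (c := c) i j b b hb]
  · simp

lemma transpose_stdBasis {r : ℕ} (i j : Fin r) (c : ℝ) :
    (Matrix.single i j c)ᵀ = Matrix.single j i c := by
  ext k l; simp [Matrix.single, and_comm]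

lemma rot_orth {r : ℕ} {i j : Fin r} (hij : i ≠ j) {a b : ℝ} (hab : a ^ 2 + b ^ 2 = 1) :
    (1 + Matrix.single i i (a - 1) + Matrix.single j j (a - 1)
      + Matrix.single j i b + Matrix.single i j (-b) : Matrix (Fin r) (Fin r) ℝ)ᵀ *
    (1 + Matrix.single i i (a - 1) + Matrix.single j j (a - 1)
      + Matrix.single j i b + Matrix.single i j (-b)) = 1 := by
  simp only [transpose_add, transpose_one, transpose_stdBasis]
  simp only [Matrix.add_mul, Matrix.mul_add, Matrix.one_mul, Matrix.mul_one,
    Matrix.single_mul_single_same, Matrix.single_mul_single_of_ne _ _ _ _ hij,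
    Matrix.single_mul_single_of_ne _ _ _ _ hij.symm, add_zero, zero_add]
  ext k l
  by_cases hk : k = i <;> by_cases hl : l = i <;> by_cases hk2 : k = j <;> by_cases hl2 : l = j <;>
    simp_all [Matrix.single, Matrix.one_apply, eq_comm] <;> nlinarith [hab]

lemma vecMulVec_sq {r : ℕ} (x : Fin r → ℝ) :
    vecMulVec x x * vecMulVec x x = (x ⬝ᵥ x) • vecMulVec x x := by
  ext k l
  simp only [Matrix.mul_apply, Matrix.vecMulVec_apply, Matrix.smul_apply, dotProduct,
    smul_eq_mul, Finset.sum_mul, Finset.mul_sum]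
  apply Finset.sum_congr rfl; intros; ring

lemma trace_vecMulVec_mul {r : ℕ} (x : Fin r → ℝ) (B : Matrix (Fin r) (Fin r) ℝ) :
    (vecMulVec x x * B).trace = x ⬝ᵥ B.mulVec x := by
  simp only [Matrix.trace, Matrix.diag, Matrix.mul_apply, Matrix.vecMulVec_apply, dotProduct,
    Matrix.mulVec, Finset.mul_sum]
  rw [Finset.sum_comm]
  apply Finset.sum_congr rfl; intros
  apply Finset.sum_congr rfl; intros; ring

lemma trace_max_psd {r : ℕ} (B : Matrix (Fin r) (Fin r) ℝ)
    (hB : ∀ O : Matrix (Fin r) (Fin r) ℝ, Oᵀ * O = 1 → (Oᵀ * B).trace ≤ B.trace)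
    (x : Fin r → ℝ) : 0 ≤ x ⬝ᵥ B.mulVec x := by
  by_cases hx : x = 0
  · simp [hx]
  have hn0 : 0 < x ⬝ᵥ x := by
    have h1 : 0 ≤ x ⬝ᵥ x := by
      simp only [dotProduct]; apply Finset.sum_nonneg; intros; exact mul_self_nonneg _
    rcases h1.lt_or_eq with h | h
    · exact h
    · exact absurd ((dotProduct_self_eq_zero).mp h.symm) hx
  set n := x ⬝ᵥ x with hn
  set A := vecMulVec x x with hA
  set O : Matrix (Fin r) (Fin r) ℝ := 1 - (2/n) • A with hO
  have hOsymm : Oᵀ = O := by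
    have hvt : (vecMulVec x x)ᵀ = vecMulVec x x := by
      ext k l; simp [Matrix.vecMulVec_apply, mul_comm]
    rw [hO, transpose_sub, transpose_smul, transpose_one, hA, hvt]
  have hA2 : (2/n) • ((2/n) • (A * A)) = (2/n) • A + (2/n) • A := by
    rw [hA, vecMulVec_sq, ← hn, smul_smul, smul_smul, ← add_smul]
    congr 1
    field_simp
    ring
  have hOorth : Oᵀ * O = 1 := by
    rw [hOsymm, hO, Matrix.sub_mul, Matrix.one_mul, Matrix.mul_sub, Matrix.mul_one,
      Matrix.smul_mul, Matrix.mul_smul, hA2]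
    abel
  have := hB O hOorth
  rw [hOsymm, hO, Matrix.sub_mul, Matrix.one_mul, Matrix.smul_mul, trace_sub, trace_smul,
    trace_vecMulVec_mul] at this
  have h2 : 0 ≤ (2/n) * (x ⬝ᵥ B.mulVec x) := by
    have := sub_le_iff_le_add.mp this
    simp only [smul_eq_mul] at this ⊢
    linarith
  have hc : 0 < 2/n := by positivity
  nlinarith

lemma trace_max_symm {r : ℕ} (B : Matrix (Fin r) (Fin r) ℝ)
    (hB : ∀ O : Matrix (Fin r) (Fin r) ℝ, Oᵀ * O = 1 → (Oᵀ * B).trace ≤ B.trace) :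
    Bᵀ = B := by
  have hpsd := trace_max_psd B hB
  ext k l
  show B l k = B k l
  by_cases hkl : k = l
  · rw [hkl]
  have hdiag : ∀ p : Fin r, 0 ≤ B p p := by
    intro p
    have := hpsd (Pi.single p 1)
    simpa [dotProduct, Matrix.mulVec, Pi.single_apply, Finset.sum_ite_eq',
      Finset.mul_sum] using this
  set c : ℝ := B k k + B l l with hc
  have hc0 : 0 ≤ c := by have := hdiag k; have := hdiag l; linarith
  set s : ℝ := B l k - B k l with hs
  set ρ : ℝ := Real.sqrt (s ^ 2 + c ^ 2) with hρ
  have hρ2 : ρ ^ 2 = s ^ 2 + c ^ 2 := Real.sq_sqrt (by positivity)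
  by_cases hρ0 : ρ = 0
  · have : s ^ 2 + c ^ 2 = 0 := by rw [← hρ2, hρ0]; ring
    have : s = 0 := by nlinarith
    linarith [this]
  have hρpos : 0 < ρ := lt_of_le_of_ne (Real.sqrt_nonneg _) (Ne.symm hρ0)
  set a : ℝ := c / ρ with ha
  set b : ℝ := s / ρ with hb
  have hab : a ^ 2 + b ^ 2 = 1 := by
    rw [ha, hb, div_pow, div_pow, ← add_div, show c ^ 2 + s ^ 2 = ρ ^ 2 by rw [hρ2]; ring]
    field_simp
  set O : Matrix (Fin r) (Fin r) ℝ := 1 + Matrix.single k k (a - 1) + Matrix.single l l (a - 1)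
      + Matrix.single l k b + Matrix.single k l (-b) with hO
  have hOorth : Oᵀ * O = 1 := rot_orth hkl hab
  have hineq := hB O hOorth
  have htr : (Oᵀ * B).trace = B.trace + ((a - 1) * c + b * s) := by
    rw [hO]
    simp only [transpose_add, transpose_one, transpose_stdBasis]
    simp only [Matrix.add_mul, Matrix.one_mul, trace_add, trace_stdBasis_mul]
    rw [hc, hs]
    ring
  rw [htr] at hineq
  have h1 : (a - 1) * c + b * s ≤ 0 := by linarith
  have h2 : a * c + b * s = ρ := by
    rw [ha, hb]
    field_simp
    nlinarith [hρ2]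
  have h3 : ρ ≤ c := by nlinarith
  have : s ^ 2 ≤ 0 := by nlinarith
  have : s = 0 := by nlinarith
  linarith

attribute [local instance] Matrix.normedAddCommGroup Matrix.normedSpace

lemma exists_min_orth {d r : ℕ} (V W : Matrix (Fin d) (Fin r) ℝ) :
    ∃ R : Matrix (Fin r) (Fin r) ℝ, Rᵀ * R = 1 ∧
      ∀ R' : Matrix (Fin r) (Fin r) ℝ, R'ᵀ * R' = 1 →
        frobSq (V * R - W) ≤ frobSq (V * R' - W) := by
  set K : Set (Matrix (Fin r) (Fin r) ℝ) := {R | Rᵀ * R = 1} with hK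
  have hKne : K.Nonempty := ⟨1, by simp [hK]⟩
  have hclosed : IsClosed K := by
    have : K = (fun R : Matrix (Fin r) (Fin r) ℝ => Rᵀ * R) ⁻¹' {1} := by
      ext R; simp [hK]
    rw [this]
    exact IsClosed.preimage ((continuous_id.matrix_transpose).matrix_mul continuous_id)
      isClosed_singleton
  have hbdd : Bornology.IsBounded K := by
    apply Bornology.IsBounded.subset
      (Metric.isBounded_closedBall (x := (0 : Matrix (Fin r) (Fin r) ℝ)) (r := 1))
    intro R hR
    simp only [Metric.mem_closedBall, dist_zero_right]
    rw [Matrix.norm_le_iff zero_le_one]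
    intro i j
    have h1 : (Rᵀ * R) j j = 1 := by rw [hR]; exact Matrix.one_apply_eq j
    have h2 : ∑ m, R m j * R m j = 1 := by
      rw [← h1]; simp [Matrix.mul_apply]
    have h3 : R i j * R i j ≤ 1 := by
      rw [← h2]
      exact Finset.single_le_sum (fun m _ => mul_self_nonneg (R m j)) (Finset.mem_univ i)
    rw [Real.norm_eq_abs]
    nlinarith [abs_nonneg (R i j), sq_abs (R i j)]
  have hcompact : IsCompact K := Metric.isCompact_of_isClosed_isBounded hclosed hbdd
  have hcont : Continuous fun R : Matrix (Fin r) (Fin r) ℝ => frobSq (V * R - W) := by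
    unfold frobSq
    apply continuous_finset_sum
    intro i _
    apply continuous_finset_sum
    intro j _
    have h1 : Continuous fun R : Matrix (Fin r) (Fin r) ℝ => (V * R - W) i j := by
      have : Continuous fun R : Matrix (Fin r) (Fin r) ℝ => V * R - W :=
        (continuous_const.matrix_mul continuous_id).sub continuous_const
      exact ((continuous_apply j).comp (continuous_apply i)).comp this
    exact h1.pow 2
  obtain ⟨R, hRK, hmin⟩ := hcompact.exists_isMinOn hKne hcont.continuousOn
  exact ⟨R, hRK, fun R' hR' => hmin hR'⟩

lemma sigma_sq_mulVec {d r : ℕ} (W : Matrix (Fin d) (Fin r) ℝ) (v : Fin r → ℝ) :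
    sigmaMin W ^ 2 * (∑ j, v j ^ 2) ≤ ∑ i, (W.mulVec v i) ^ 2 := by
  have hσ0 : 0 ≤ sigmaMin W :=
    Real.sInf_nonneg (by rintro x ⟨u, hu, rfl⟩; exact Real.sqrt_nonneg _)
  by_cases hn : (∑ j, v j ^ 2) = 0
  · have hv : v = 0 := by
      funext j
      have := (Finset.sum_eq_zero_iff_of_nonneg (fun j _ => sq_nonneg (v j))).mp hn j
        (Finset.mem_univ j)
      exact pow_eq_zero_iff (n := 2) (by norm_num) |>.mp this
    rw [hn, hv]
    simp [Matrix.mulVec_zero]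
  have hnpos : 0 < ∑ j, v j ^ 2 := by
    rcases (Finset.sum_nonneg (fun j _ => sq_nonneg (v j))).lt_or_eq with h | h
    · exact h
    · exact absurd h.symm hn
  set n : ℝ := ∑ j, v j ^ 2 with hndef
  set c : ℝ := (Real.sqrt n)⁻¹ with hcdef
  have hsq : Real.sqrt n ^ 2 = n := Real.sq_sqrt hnpos.le
  have hsqpos : 0 < Real.sqrt n := Real.sqrt_pos.mpr hnpos
  have hu : (∑ j, (c • v) j ^ 2) = 1 := by
    simp only [Pi.smul_apply, smul_eq_mul, mul_pow, ← Finset.mul_sum, ← hndef]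
    rw [hcdef, inv_pow, hsq, inv_mul_cancel₀ hnpos.ne']
  have hmem : Real.sqrt (∑ i, (W.mulVec (c • v) i) ^ 2) ∈ svSet W := ⟨c • v, hu, rfl⟩
  have hbdd : BddBelow (svSet W) :=
    ⟨0, by rintro x ⟨u, hu1, rfl⟩; exact Real.sqrt_nonneg _⟩
  have hle : sigmaMin W ≤ Real.sqrt (∑ i, (W.mulVec (c • v) i) ^ 2) := csInf_le hbdd hmem
  have h2 : sigmaMin W ^ 2 ≤ ∑ i, (W.mulVec (c • v) i) ^ 2 := by
    have hrhs : 0 ≤ ∑ i, (W.mulVec (c • v) i) ^ 2 :=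
      Finset.sum_nonneg fun i _ => sq_nonneg _
    nlinarith [Real.sq_sqrt hrhs, Real.sqrt_nonneg (∑ i, (W.mulVec (c • v) i) ^ 2)]
  have h3 : ∑ i, (W.mulVec (c • v) i) ^ 2 = c ^ 2 * ∑ i, (W.mulVec v i) ^ 2 := by
    rw [Matrix.mulVec_smul]
    simp only [Pi.smul_apply, smul_eq_mul, mul_pow, ← Finset.mul_sum]
  rw [h3] at h2
  have hc2 : c ^ 2 = n⁻¹ := by
    rw [hcdef, inv_pow, hsq]
  rw [hc2] at h2
  have := mul_le_mul_of_nonneg_right h2 hnpos.le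
  calc sigmaMin W ^ 2 * n ≤ (n⁻¹ * ∑ i, (W.mulVec v i) ^ 2) * n := this
    _ = ∑ i, (W.mulVec v i) ^ 2 := by field_simp

lemma trace_conj' {d r : ℕ} (Δ : Matrix (Fin d) (Fin r) ℝ) (M : Matrix (Fin r) (Fin r) ℝ) :
    (Δ * M * Δᵀ).trace = ∑ i, (Δ i) ⬝ᵥ M.mulVec (Δ i) := by
  simp only [Matrix.trace, Matrix.diag, Matrix.mul_apply, Matrix.transpose_apply, dotProduct,
    Matrix.mulVec, Finset.sum_mul, Finset.mul_sum]
  apply Finset.sum_congr rfl; intro i _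
  rw [Finset.sum_comm]
  apply Finset.sum_congr rfl; intro k _
  apply Finset.sum_congr rfl; intro l _
  ring

lemma dot_WtW {d r : ℕ} (W : Matrix (Fin d) (Fin r) ℝ) (v : Fin r → ℝ) :
    v ⬝ᵥ (Wᵀ * W).mulVec v = ∑ i, (W.mulVec v i) ^ 2 := by
  rw [← Matrix.mulVec_mulVec, Matrix.dotProduct_mulVec, Matrix.vecMul_transpose]
  simp [dotProduct, sq]

set_option maxHeartbeats 1000000 in
/-- Gram-matrix error controls aligned factor error: for full-column-rank `W` there is
an orthogonal `R` with `‖VR − W‖_F ≤ ‖VVᵀ − WWᵀ‖_F / ((√2 − 1)^{1/2} σ_r(W))`. -/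
theorem gram_error_controls_factor_error {d r : ℕ} (V W : Matrix (Fin d) (Fin r) ℝ)
    (hσ : 0 < sigmaMin W) :
    ∃ R : Matrix (Fin r) (Fin r) ℝ, Rᵀ * R = 1 ∧ R * Rᵀ = 1 ∧
      frobNorm (V * R - W) ≤
        frobNorm (V * Vᵀ - W * Wᵀ) / (Real.sqrt (Real.sqrt 2 - 1) * sigmaMin W) := by
  obtain ⟨R, hRK, hmin⟩ := exists_min_orth V W
  have hRR : R * Rᵀ = 1 := mul_eq_one_comm.mp hRK
  refine ⟨R, hRK, hRR, ?_⟩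
  set σ : ℝ := sigmaMin W with hσdef
  set U : Matrix (Fin d) (Fin r) ℝ := V * R with hUdef
  set Δ : Matrix (Fin d) (Fin r) ℝ := U - W with hΔdef
  set B : Matrix (Fin r) (Fin r) ℝ := Uᵀ * W with hBdef
  -- maximality of trace at identity
  have hBmax : ∀ O : Matrix (Fin r) (Fin r) ℝ, Oᵀ * O = 1 → (Oᵀ * B).trace ≤ B.trace := by
    intro O hO
    have hO2 : O * Oᵀ = 1 := mul_eq_one_comm.mp hO
    have hRO : (R * O)ᵀ * (R * O) = 1 := by
      rw [transpose_mul, show Oᵀ * Rᵀ * (R * O) = Oᵀ * ((Rᵀ * R) * O) by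
        simp only [Matrix.mul_assoc], hRK, Matrix.one_mul, hO]
    have hmin2 := hmin (R * O) hRO
    rw [show V * (R * O) = U * O by rw [hUdef, Matrix.mul_assoc]] at hmin2
    rw [hΔdef, frobSq_sub, frobSq_sub] at hmin2
    have e1 : ((U * O)ᵀ * (U * O)).trace = (Uᵀ * U).trace := by
      rw [transpose_mul, show Oᵀ * Uᵀ * (U * O) = Oᵀ * (Uᵀ * U * O) by
        simp only [Matrix.mul_assoc], trace_mul_comm,
        show Uᵀ * U * O * Oᵀ = Uᵀ * U * (O * Oᵀ) by simp only [Matrix.mul_assoc], hO2,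
        Matrix.mul_one]
    have e2 : ((U * O)ᵀ * W) = Oᵀ * B := by rw [transpose_mul, hBdef, Matrix.mul_assoc]
    rw [e1, e2, ← hBdef] at hmin2
    linarith
  have hsym : Bᵀ = B := trace_max_symm B hBmax
  have hpsd := trace_max_psd B hBmax
  -- the key matrices
  set G : Matrix (Fin r) (Fin r) ℝ := Wᵀ * W with hGdef
  set H : Matrix (Fin r) (Fin r) ℝ := Δᵀ * Δ with hHdef
  set S : Matrix (Fin r) (Fin r) ℝ := Wᵀ * Δ with hSdef
  have hWU : Wᵀ * U = B := by rw [← hsym, hBdef, transpose_mul, transpose_transpose]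
  have hS1 : S = B - G := by
    rw [hSdef, hΔdef, Matrix.mul_sub, hWU, hGdef]
  have hGsym : Gᵀ = G := by rw [hGdef, transpose_mul, transpose_transpose]
  have hHsym : Hᵀ = H := by rw [hHdef, transpose_mul, transpose_transpose]
  have hSsym : Sᵀ = S := by rw [hS1, transpose_sub, hsym, hGsym]
  have hST : Δᵀ * W = S := by rw [← hSsym, hSdef, transpose_mul, transpose_transpose]
  -- scalars
  set z : ℝ := (S * S).trace with hzdef
  set g : ℝ := (G * H).trace with hgdef
  set x : ℝ := (S * H).trace with hxdef
  set h2 : ℝ := (H * H).trace with hh2def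
  set t : ℝ := frobSq Δ with htdef
  -- the key identity
  have hUU : U * Uᵀ = V * Vᵀ := by
    rw [hUdef, transpose_mul, show V * R * (Rᵀ * Vᵀ) = V * (R * Rᵀ) * Vᵀ by
      simp only [Matrix.mul_assoc], hRR, Matrix.mul_one]
  have hE : V * Vᵀ - W * Wᵀ = Δ * Wᵀ + W * Δᵀ + Δ * Δᵀ := by
    rw [← hUU, hΔdef]
    simp only [transpose_sub, Matrix.sub_mul, Matrix.mul_sub]
    abel
  have hEsym : (Δ * Wᵀ + W * Δᵀ + Δ * Δᵀ)ᵀ = Δ * Wᵀ + W * Δᵀ + Δ * Δᵀ := by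
    simp only [transpose_add, transpose_mul, transpose_transpose]
    abel
  have hkey : frobSq (V * Vᵀ - W * Wᵀ) = 2 * z + 2 * g + 4 * x + h2 := by
    rw [frobSq_eq_trace, hE, hEsym]
    simp only [Matrix.add_mul, Matrix.mul_add, trace_add]
    rw [trace4 Δ W Δ W, trace4 Δ W W Δ, trace4 Δ W Δ Δ, trace4 W Δ Δ W, trace4 W Δ W Δ,
      trace4 W Δ Δ Δ, trace4 Δ Δ Δ W, trace4 Δ Δ W Δ, trace4 Δ Δ Δ Δ]
    rw [hST, ← hSdef, ← hGdef, ← hHdef]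
    rw [trace_mul_comm H G, trace_mul_comm H S]
    rw [← hzdef, ← hgdef, ← hxdef, ← hh2def]
    ring
  -- inequalities
  have hq : 0 ≤ g + x := by
    have hBH : (B * H).trace = g + x := by
      rw [show B = G + S by rw [hS1]; abel, Matrix.add_mul, trace_add, ← hgdef, ← hxdef]
    rw [← hBH, hHdef, show B * (Δᵀ * Δ) = (B * Δᵀ) * Δ by simp only [Matrix.mul_assoc],
      trace_mul_comm, show Δ * (B * Δᵀ) = Δ * B * Δᵀ by simp only [Matrix.mul_assoc],
      trace_conj']
    exact Finset.sum_nonneg fun i _ => hpsd (Δ i)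
  have hg : σ ^ 2 * t ≤ g := by
    have hGH : g = ∑ i, (Δ i) ⬝ᵥ G.mulVec (Δ i) := by
      rw [hgdef, hHdef, show G * (Δᵀ * Δ) = (G * Δᵀ) * Δ by simp only [Matrix.mul_assoc],
        trace_mul_comm, show Δ * (G * Δᵀ) = Δ * G * Δᵀ by simp only [Matrix.mul_assoc],
        trace_conj']
    rw [hGH]
    have ht' : t = ∑ i, ∑ j, (Δ i j) ^ 2 := by rw [htdef]; rfl
    rw [ht', Finset.mul_sum]
    apply Finset.sum_le_sum
    intro i _
    rw [hGdef, dot_WtW]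
    exact sigma_sq_mulVec W (Δ i)
  have ht0 : 0 ≤ t := frobSq_nonneg Δ
  have hz' : z = frobSq S := by
    rw [hzdef, frobSq_eq_trace, hSsym]
  have hh2' : h2 = frobSq H := by
    rw [hh2def, frobSq_eq_trace, hHsym]
  have hz0 : 0 ≤ z := by rw [hz']; exact frobSq_nonneg S
  have hh20 : 0 ≤ h2 := by rw [hh2']; exact frobSq_nonneg H
  -- Cauchy-Schwarz
  have hx2 : x ^ 2 ≤ z * h2 := by
    have h1 : x = ∑ p ∈ (univ ×ˢ univ : Finset (Fin r × Fin r)), S p.1 p.2 * H p.1 p.2 := by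
      rw [Finset.sum_product, hxdef]
      simp only [Matrix.trace, Matrix.diag, Matrix.mul_apply]
      apply Finset.sum_congr rfl; intro k _
      apply Finset.sum_congr rfl; intro l _
      have hHe : H l k = H k l := by conv_lhs => rw [← hHsym, Matrix.transpose_apply]
      rw [hHe]
    have h2' : z = ∑ p ∈ (univ ×ˢ univ : Finset (Fin r × Fin r)), S p.1 p.2 ^ 2 := by
      rw [hz', frobSq, Finset.sum_product]
    have h3' : h2 = ∑ p ∈ (univ ×ˢ univ : Finset (Fin r × Fin r)), H p.1 p.2 ^ 2 := by
      rw [hh2', frobSq, Finset.sum_product]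
    rw [h1, h2', h3']
    exact Finset.sum_mul_sq_le_sq_mul_sq _ _ _
  -- lower bound on x
  set sb : ℝ := Real.sqrt z with hsbdef
  set hb : ℝ := Real.sqrt h2 with hhbdef
  have hsb0 : 0 ≤ sb := Real.sqrt_nonneg _
  have hhb0 : 0 ≤ hb := Real.sqrt_nonneg _
  have hsb2 : sb ^ 2 = z := Real.sq_sqrt hz0
  have hhb2 : hb ^ 2 = h2 := Real.sq_sqrt hh20
  have hxlow : -(sb * hb) ≤ x := by
    have h1 : |x| ≤ sb * hb := by
      rw [← Real.sqrt_sq_eq_abs]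
      calc Real.sqrt (x ^ 2) ≤ Real.sqrt (z * h2) := Real.sqrt_le_sqrt hx2
        _ = sb * hb := by rw [hsbdef, hhbdef, Real.sqrt_mul hz0]
    linarith [neg_abs_le x]
  -- main inequality
  set c : ℝ := Real.sqrt 2 with hcdef
  have hc2 : c ^ 2 = 2 := Real.sq_sqrt (by norm_num)
  have hc1 : 1 ≤ c := by nlinarith [Real.sqrt_nonneg 2]
  have hc1' : 1 < c := by nlinarith
  have hmain : (c - 1) * σ ^ 2 * t ≤ frobSq (V * Vᵀ - W * Wᵀ) := by
    have hmgx : -g ≤ x := by linarith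
    have hc0 : (0:ℝ) ≤ c := by linarith
    have hcle2 : c ≤ 2 := by nlinarith
    have hcx : 2*c*(-(sb*hb)) ≤ 2*c*x := mul_le_mul_of_nonneg_left hxlow (by linarith)
    have hcs : (c*sb)^2 = 2*z := by rw [mul_pow, hc2, hsb2]
    have hA : 0 ≤ 2*z + h2 + 2*c*x := by nlinarith [sq_nonneg (c*sb - hb), hcs, hhb2, hcx]
    have hB2 : (4 - 2*c)*(-g) ≤ (4 - 2*c)*x := mul_le_mul_of_nonneg_left hmgx (by linarith)
    have hgc : (2*c - 2)*(σ^2*t) ≤ (2*c - 2)*g := mul_le_mul_of_nonneg_left hg (by linarith)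
    have hnn : 0 ≤ (c - 1)*(σ^2*t) := mul_nonneg (by linarith) (mul_nonneg (sq_nonneg σ) ht0)
    rw [hkey]
    nlinarith [hA, hB2, hgc, hnn]
  -- conclude
  have hd : 0 < Real.sqrt (c - 1) * σ :=
    mul_pos (Real.sqrt_pos.mpr (by linarith)) hσ
  unfold frobNorm
  rw [← htdef]
  rw [le_div_iff₀ hd]
  have heq : Real.sqrt t * (Real.sqrt (c - 1) * σ) = Real.sqrt (t * ((c - 1) * σ ^ 2)) := by
    rw [Real.sqrt_mul ht0, Real.sqrt_mul (by linarith : (0:ℝ) ≤ c - 1), Real.sqrt_sq hσ.le]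
  rw [heq]
  apply Real.sqrt_le_sqrt
  nlinarith [hmain]
end

section
/- One-step contraction of gradient descent for symmetric low-rank factorization (noiseless, aligned case): let M = W Wᵀ with W ∈ ℝ^{d×r} of rank r, and let V ∈ ℝ^{d×r} satisfy ‖V − W‖ ≤ σ_r(W)²/(5‖W‖) (spectral norm). Then for step size 0 < η ≤ 1/(25‖W‖²), the update V⁺ = V − η(VVᵀ − M)V satisfies dist(V⁺, W) ≤ (1 − η σ_r(W)²/4) dist(V, W), where dist(V, W) = min_{R ∈ O(r)} ‖VR − W‖. -/
open Matrix Finset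

/-- Largest singular value (spectral norm). -/
noncomputable def sigmaMax {m n : ℕ} (M : Matrix (Fin m) (Fin n) ℝ) : ℝ := sSup (svSet M)

/-- Spectral-norm distance up to orthogonal alignment:
`dist(V, W) = min_{R ∈ O(r)} ‖VR − W‖`. -/
noncomputable def distO {d r : ℕ} (V W : Matrix (Fin d) (Fin r) ℝ) : ℝ :=
  sInf {x | ∃ R : Matrix (Fin r) (Fin r) ℝ,
    Rᵀ * R = 1 ∧ R * Rᵀ = 1 ∧ x = sigmaMax (V * R - W)}

open scoped Matrix.Norms.L2Operator
open scoped MatrixOrder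

-- Euclidean norm of a plain vector
lemma en_eq {n : ℕ} (v : Fin n → ℝ) :
    ‖(EuclideanSpace.equiv (Fin n) ℝ).symm v‖ = Real.sqrt (∑ i, v i ^ 2) := by
  rw [EuclideanSpace.norm_eq]
  congr 1; apply Finset.sum_congr rfl; intro i _
  rw [Real.norm_eq_abs, sq_abs]; rfl

lemma mem_svSet_le_norm {m n : ℕ} (M : Matrix (Fin m) (Fin n) ℝ) {x : ℝ} (hx : x ∈ svSet M) :
    x ≤ ‖M‖ := by
  obtain ⟨v, hv, rfl⟩ := hx
  have h1 : Real.sqrt (∑ i, (M.mulVec v i) ^ 2)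
      = ‖(EuclideanSpace.equiv (Fin m) ℝ).symm (M.mulVec v)‖ := (en_eq _).symm
  have h2 := M.l2_opNorm_mulVec ((EuclideanSpace.equiv (Fin n) ℝ).symm v)
  have hveq : ‖(EuclideanSpace.equiv (Fin n) ℝ).symm v‖ = 1 := by
    rw [en_eq, hv, Real.sqrt_one]
  rw [hveq, mul_one] at h2
  rw [h1]; exact h2

lemma svSet_bddAbove {m n : ℕ} (M : Matrix (Fin m) (Fin n) ℝ) : BddAbove (svSet M) :=
  ⟨‖M‖, fun _ hx => mem_svSet_le_norm M hx⟩

lemma svSet_nonneg {m n : ℕ} (M : Matrix (Fin m) (Fin n) ℝ) {x : ℝ} (hx : x ∈ svSet M) :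
    0 ≤ x := by obtain ⟨v, hv, rfl⟩ := hx; exact Real.sqrt_nonneg _

lemma svSet_nonempty {m n : ℕ} (hn : 0 < n) (M : Matrix (Fin m) (Fin n) ℝ) :
    (svSet M).Nonempty := by
  refine ⟨_, Pi.single ⟨0, hn⟩ 1, ?_, rfl⟩
  rw [Finset.sum_eq_single (⟨0, hn⟩ : Fin n)]
  · simp
  · intro b _ hb; rw [Pi.single_eq_of_ne hb]; ring
  · intro h; exact absurd (Finset.mem_univ _) h

lemma en_eq' {n : ℕ} (v : Fin n → ℝ) :
    ‖(WithLp.equiv 2 (Fin n → ℝ)).symm v‖ = Real.sqrt (∑ i, v i ^ 2) := en_eq v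

lemma sigmaMax_eq_norm {m n : ℕ} (M : Matrix (Fin m) (Fin n) ℝ) : sigmaMax M = ‖M‖ := by
  rcases Nat.eq_zero_or_pos n with hn | hn
  · subst hn
    have hM : M = 0 := by ext i j; exact absurd j.2 (by omega)
    have hs : svSet M = ∅ := by
      ext x; simp only [svSet, Set.mem_setOf_eq, Set.mem_empty_iff_false, iff_false]
      rintro ⟨v, hv, -⟩
      simp at hv
    rw [sigmaMax, hs, Real.sSup_empty, hM, norm_zero]
  · apply le_antisymm
    · exact csSup_le (svSet_nonempty hn M) (fun x hx => mem_svSet_le_norm M hx)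
    · have hc : 0 ≤ sSup (svSet M) :=
        le_csSup_of_le (svSet_bddAbove M) (svSet_nonempty hn M).choose_spec
          (svSet_nonneg M (svSet_nonempty hn M).choose_spec)
      rw [Matrix.l2_opNorm_def]
      apply ContinuousLinearMap.opNorm_le_bound _ hc
      intro x
      simp only [LinearEquiv.trans_apply, LinearMap.coe_toContinuousLinearMap',
        Matrix.toEuclideanLin_apply]
      rcases eq_or_ne x 0 with rfl | hx0
      · simp
      · have hxn : (0:ℝ) < ‖x‖ := norm_pos_iff.mpr hx0
        set u : Fin n → ℝ := ‖x‖⁻¹ • (WithLp.equiv 2 (Fin n → ℝ) x) with hu_def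
        have hu : (∑ j, u j ^ 2) = 1 := by
          have h1 : ‖(WithLp.equiv 2 (Fin n → ℝ)).symm u‖ = 1 := by
            have : (WithLp.equiv 2 (Fin n → ℝ)).symm u = ‖x‖⁻¹ • x := by
              apply (WithLp.equiv 2 (Fin n → ℝ)).injective
              simp [u]
            rw [this, norm_smul, norm_inv, norm_norm, inv_mul_cancel₀ (ne_of_gt hxn)]
          rw [en_eq'] at h1
          have h2 : (0:ℝ) ≤ ∑ j, u j ^ 2 := Finset.sum_nonneg (fun j _ => sq_nonneg _)
          nlinarith [Real.sq_sqrt h2, h1]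
        have hle := le_csSup (svSet_bddAbove M) (⟨u, hu, rfl⟩ : Real.sqrt (∑ i, (M.mulVec u i) ^ 2) ∈ svSet M)
        have heq2 : Real.sqrt (∑ i, (M.mulVec u i) ^ 2)
            = ‖x‖⁻¹ * ‖(WithLp.equiv 2 (Fin m → ℝ)).symm (M *ᵥ (WithLp.equiv 2 (Fin n → ℝ)) x)‖ := by
          have hMu : M.mulVec u = ‖x‖⁻¹ • (M.mulVec (WithLp.equiv 2 (Fin n → ℝ) x)) := by
            rw [hu_def, Matrix.mulVec_smul]
          rw [← en_eq', hMu]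
          have : (WithLp.equiv 2 (Fin m → ℝ)).symm (‖x‖⁻¹ • M *ᵥ (WithLp.equiv 2 (Fin n → ℝ)) x)
              = ‖x‖⁻¹ • (WithLp.equiv 2 (Fin m → ℝ)).symm (M *ᵥ (WithLp.equiv 2 (Fin n → ℝ)) x) := by
            apply (WithLp.equiv 2 (Fin m → ℝ)).injective; simp
          rw [this, norm_smul, norm_inv, norm_norm]
        rw [heq2] at hle
        calc ‖(WithLp.equiv 2 (Fin m → ℝ)).symm (M *ᵥ (WithLp.equiv 2 (Fin n → ℝ)) x)‖
            = (‖x‖⁻¹ * ‖(WithLp.equiv 2 (Fin m → ℝ)).symm (M *ᵥ (WithLp.equiv 2 (Fin n → ℝ)) x)‖) * ‖x‖ := by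
              field_simp
          _ ≤ sSup (svSet M) * ‖x‖ := mul_le_mul_of_nonneg_right hle (le_of_lt hxn)

lemma sigmaMax_nonneg {m n : ℕ} (M : Matrix (Fin m) (Fin n) ℝ) : 0 ≤ sigmaMax M := by
  rw [sigmaMax_eq_norm]; exact norm_nonneg _

lemma sigmaMax_add_le {m n : ℕ} (X Y : Matrix (Fin m) (Fin n) ℝ) :
    sigmaMax (X + Y) ≤ sigmaMax X + sigmaMax Y := by
  simp only [sigmaMax_eq_norm]; exact norm_add_le _ _

lemma sigmaMax_mul_le {m n k : ℕ} (X : Matrix (Fin m) (Fin n) ℝ) (Y : Matrix (Fin n) (Fin k) ℝ) :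
    sigmaMax (X * Y) ≤ sigmaMax X * sigmaMax Y := by
  simp only [sigmaMax_eq_norm]; exact Matrix.l2_opNorm_mul X Y

lemma sigmaMax_smul {m n : ℕ} (c : ℝ) (X : Matrix (Fin m) (Fin n) ℝ) :
    sigmaMax (c • X) = |c| * sigmaMax X := by
  simp only [sigmaMax_eq_norm]
  rw [show c • X = (c : ℝ) • X from rfl, norm_smul, Real.norm_eq_abs]

lemma sigmaMax_neg {m n : ℕ} (X : Matrix (Fin m) (Fin n) ℝ) : sigmaMax (-X) = sigmaMax X := by
  simp only [sigmaMax_eq_norm]; exact norm_neg _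

lemma sigmaMax_transpose {m n : ℕ} (X : Matrix (Fin m) (Fin n) ℝ) :
    sigmaMax Xᵀ = sigmaMax X := by
  have h : Xᴴ = Xᵀ := by ext i j; simp [Matrix.conjTranspose_apply]
  simp only [sigmaMax_eq_norm]
  rw [← h, Matrix.l2_opNorm_conjTranspose]

lemma mulVec_norm_le {m n : ℕ} (M : Matrix (Fin m) (Fin n) ℝ) (v : Fin n → ℝ) :
    Real.sqrt (∑ i, (M.mulVec v i) ^ 2) ≤ sigmaMax M * Real.sqrt (∑ j, v j ^ 2) := by
  rw [sigmaMax_eq_norm, ← en_eq', ← en_eq']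
  exact M.l2_opNorm_mulVec ((WithLp.equiv 2 (Fin n → ℝ)).symm v)

lemma sigmaMax_le_of_bound {m n : ℕ} (M : Matrix (Fin m) (Fin n) ℝ) (c : ℝ) (hc : 0 ≤ c)
    (h : ∀ v : Fin n → ℝ, Real.sqrt (∑ i, (M.mulVec v i) ^ 2) ≤ c * Real.sqrt (∑ j, v j ^ 2)) :
    sigmaMax M ≤ c := by
  rw [sigmaMax_eq_norm, Matrix.l2_opNorm_def]
  apply ContinuousLinearMap.opNorm_le_bound _ hc
  intro x
  simp only [LinearEquiv.trans_apply, LinearMap.coe_toContinuousLinearMap',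
    Matrix.toEuclideanLin_apply]
  have h2 := h (WithLp.equiv 2 (Fin n → ℝ) x)
  rw [← en_eq', ← en_eq'] at h2
  simpa using h2

lemma svSet_bddBelow {m n : ℕ} (M : Matrix (Fin m) (Fin n) ℝ) : BddBelow (svSet M) :=
  ⟨0, fun _ hx => svSet_nonneg M hx⟩

lemma sigmaMin_nonneg {m n : ℕ} (hn : 0 < n) (M : Matrix (Fin m) (Fin n) ℝ) :
    0 ≤ sigmaMin M :=
  le_csInf (svSet_nonempty hn M) (fun _ hx => svSet_nonneg M hx)

lemma sigmaMin_le_sigmaMax {m n : ℕ} (hn : 0 < n) (M : Matrix (Fin m) (Fin n) ℝ) :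
    sigmaMin M ≤ sigmaMax M :=
  csInf_le_csSup (svSet_nonempty hn M) (svSet_bddBelow M) (svSet_bddAbove M)

lemma sum_sq_eq_zero_iff {n : ℕ} (v : Fin n → ℝ) : (∑ j, v j ^ 2) = 0 ↔ v = 0 := by
  constructor
  · intro h
    ext j
    have := (Finset.sum_eq_zero_iff_of_nonneg (fun i _ => sq_nonneg (v i))).mp h j
      (Finset.mem_univ j)
    exact pow_eq_zero_iff (n := 2) (by norm_num) |>.mp this
  · rintro rfl; simp

lemma sigmaMin_mulVec_le {m n : ℕ} (M : Matrix (Fin m) (Fin n) ℝ) (v : Fin n → ℝ) :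
    sigmaMin M * Real.sqrt (∑ j, v j ^ 2) ≤ Real.sqrt (∑ i, (M.mulVec v i) ^ 2) := by
  rcases eq_or_ne v 0 with rfl | hv
  · simp
  · have ht : (0:ℝ) < ∑ j, v j ^ 2 := by
      rcases lt_or_eq_of_le (Finset.sum_nonneg (fun j _ => sq_nonneg (v j))) with h | h
      · exact h
      · exact absurd ((sum_sq_eq_zero_iff v).mp h.symm) hv
    set t := Real.sqrt (∑ j, v j ^ 2) with htdef
    have ht0 : 0 < t := Real.sqrt_pos.mpr ht
    set u := t⁻¹ • v with hudef
    have hu : (∑ j, u j ^ 2) = 1 := by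
      simp only [hudef, Pi.smul_apply, smul_eq_mul, mul_pow, ← Finset.mul_sum]
      rw [← Real.sq_sqrt (le_of_lt ht), ← htdef]
      field_simp
    have hmem : Real.sqrt (∑ i, (M.mulVec u i) ^ 2) ∈ svSet M := ⟨u, hu, rfl⟩
    have hle := csInf_le (svSet_bddBelow M) hmem
    have hsc : Real.sqrt (∑ i, (M.mulVec u i) ^ 2)
        = t⁻¹ * Real.sqrt (∑ i, (M.mulVec v i) ^ 2) := by
      have : M.mulVec u = t⁻¹ • M.mulVec v := by rw [hudef, Matrix.mulVec_smul]
      rw [this]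
      simp only [Pi.smul_apply, smul_eq_mul, mul_pow, ← Finset.mul_sum]
      rw [Real.sqrt_mul (by positivity), Real.sqrt_sq (by positivity)]
    rw [hsc] at hle
    calc sigmaMin M * t ≤ (t⁻¹ * Real.sqrt (∑ i, (M.mulVec v i) ^ 2)) * t :=
          mul_le_mul_of_nonneg_right hle (le_of_lt ht0)
      _ = Real.sqrt (∑ i, (M.mulVec v i) ^ 2) := by field_simp

lemma sum_sq_mulVec_le {m n : ℕ} (M : Matrix (Fin m) (Fin n) ℝ) (v : Fin n → ℝ) :
    (∑ i, (M.mulVec v i) ^ 2) ≤ sigmaMax M ^ 2 * ∑ j, v j ^ 2 := by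
  have h := mulVec_norm_le M v
  have h1 : (0:ℝ) ≤ ∑ i, (M.mulVec v i) ^ 2 := Finset.sum_nonneg (fun i _ => sq_nonneg _)
  have h2 : (0:ℝ) ≤ ∑ j, v j ^ 2 := Finset.sum_nonneg (fun j _ => sq_nonneg _)
  nlinarith [Real.sq_sqrt h1, Real.sq_sqrt h2, Real.sqrt_nonneg (∑ i, (M.mulVec v i) ^ 2),
    Real.sqrt_nonneg (∑ j, v j ^ 2), sigmaMax_nonneg M]

lemma sigmaMin_sq_le_quad {m n : ℕ} (M : Matrix (Fin m) (Fin n) ℝ) (v : Fin n → ℝ) :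
    sigmaMin M ^ 2 * (∑ j, v j ^ 2) ≤ ∑ i, (M.mulVec v i) ^ 2 := by
  rcases Nat.eq_zero_or_pos n with hn | hn
  · have hz : (∑ j, v j ^ 2) = 0 := by
      apply Finset.sum_eq_zero; intro j _; exact absurd j.2 (by omega)
    rw [hz, mul_zero]
    exact Finset.sum_nonneg (fun i _ => sq_nonneg _)
  · have h := sigmaMin_mulVec_le M v
    have h1 : (0:ℝ) ≤ ∑ i, (M.mulVec v i) ^ 2 := Finset.sum_nonneg (fun i _ => sq_nonneg _)
    have h2 : (0:ℝ) ≤ ∑ j, v j ^ 2 := Finset.sum_nonneg (fun j _ => sq_nonneg _)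
    have hσ := sigmaMin_nonneg hn M
    have hL : 0 ≤ sigmaMin M * Real.sqrt (∑ j, v j ^ 2) := by positivity
    have hsq := mul_le_mul h h hL (Real.sqrt_nonneg _)
    rw [← Real.sqrt_mul_self h2] at hsq
    nlinarith [Real.sq_sqrt h1, Real.sq_sqrt h2, Real.sqrt_nonneg (∑ j, v j ^ 2)]

lemma conjT_eq_transpose {m n : ℕ} (A : Matrix (Fin m) (Fin n) ℝ) : Aᴴ = Aᵀ := by
  ext i j; simp [Matrix.conjTranspose_apply]

lemma isHermitian_of_symm {k : ℕ} {P : Matrix (Fin k) (Fin k) ℝ} (h : Pᵀ = P) :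
    P.IsHermitian := by
  unfold Matrix.IsHermitian
  rw [conjT_eq_transpose, h]

lemma dot_self_eq_sum_sq {k : ℕ} (v : Fin k → ℝ) : v ⬝ᵥ v = ∑ j, v j ^ 2 := by
  simp [dotProduct, pow_two]

set_option maxHeartbeats 1000000 in
lemma psd_sigmaMax_le {k : ℕ} {P : Matrix (Fin k) (Fin k) ℝ} (hP : P.PosSemidef) {β : ℝ}
    (hβ0 : 0 ≤ β) (hβ : (β • 1 - P).PosSemidef) : sigmaMax P ≤ β := by
  classical
  apply sigmaMax_le_of_bound _ β hβ0
  intro v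
  have hPt : Pᵀ = P := by rw [← conjT_eq_transpose, hP.1]
  -- key quadratic bounds
  have h1 : (∑ i, (P.mulVec v i) ^ 2) = v ⬝ᵥ ((P * P).mulVec v) := by
    rw [← dot_self_eq_sum_sq]
    calc (P.mulVec v) ⬝ᵥ (P.mulVec v)
        = ((P.mulVec v) ᵥ* P) ⬝ᵥ v := by rw [← Matrix.dotProduct_mulVec]
      _ = (P.mulVec (P.mulVec v)) ⬝ᵥ v := by rw [← Matrix.mulVec_transpose, hPt]
      _ = ((P * P).mulVec v) ⬝ᵥ v := by rw [Matrix.mulVec_mulVec]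
      _ = v ⬝ᵥ ((P * P).mulVec v) := dotProduct_comm _ _
  have hS := hβ.mul_mul_conjTranspose_same (CFC.sqrt P)
  have hSh : (CFC.sqrt P)ᴴ = CFC.sqrt P := (CFC.sqrt_nonneg P).posSemidef.1
  rw [hSh] at hS
  have hkey : CFC.sqrt P * (β • 1 - P) * CFC.sqrt P = β • P - P * P := by
    have hss : CFC.sqrt P * CFC.sqrt P = P := CFC.sqrt_mul_sqrt_self P hP.nonneg
    rw [Matrix.mul_sub, Matrix.sub_mul]
    rw [mul_smul_comm, mul_one, Matrix.smul_mul, hss]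
    congr 1
    calc CFC.sqrt P * P * CFC.sqrt P = CFC.sqrt P * (CFC.sqrt P * CFC.sqrt P) * CFC.sqrt P := by rw [hss]
      _ = (CFC.sqrt P * CFC.sqrt P) * (CFC.sqrt P * CFC.sqrt P) := by noncomm_ring
      _ = P * P := by rw [hss]
  rw [hkey] at hS
  have h2 := hS.dotProduct_mulVec_nonneg v
  have h3 := hβ.dotProduct_mulVec_nonneg v
  have hstar : (star v : Fin k → ℝ) = v := by funext i; simp
  rw [hstar] at h2 h3
  rw [Matrix.sub_mulVec, dotProduct_sub] at h2 h3
  rw [Matrix.smul_mulVec, dotProduct_smul] at h2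
  rw [Matrix.smul_mulVec, Matrix.one_mulVec, dotProduct_smul,
    dot_self_eq_sum_sq] at h3
  -- conclude
  have hsum : (∑ i, (P.mulVec v i) ^ 2) ≤ β ^ 2 * ∑ j, v j ^ 2 := by
    have hquad : v ⬝ᵥ (P.mulVec v) ≤ β * ∑ j, v j ^ 2 := by
      simpa [smul_eq_mul] using h3
    have h2' : v ⬝ᵥ ((P * P).mulVec v) ≤ β * (v ⬝ᵥ (P.mulVec v)) := by
      simpa [smul_eq_mul] using h2
    calc (∑ i, (P.mulVec v i) ^ 2) = v ⬝ᵥ ((P * P).mulVec v) := h1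
      _ ≤ β * (v ⬝ᵥ (P.mulVec v)) := h2'
      _ ≤ β * (β * ∑ j, v j ^ 2) := mul_le_mul_of_nonneg_left hquad hβ0
      _ = β ^ 2 * ∑ j, v j ^ 2 := by ring
  have h4 : Real.sqrt (∑ i, (P.mulVec v i) ^ 2) ≤ Real.sqrt (β ^ 2 * ∑ j, v j ^ 2) :=
    Real.sqrt_le_sqrt hsum
  rwa [Real.sqrt_mul (sq_nonneg β), Real.sqrt_sq hβ0] at h4

lemma quad_AAT {m n : ℕ} (W : Matrix (Fin m) (Fin n) ℝ) (v : Fin m → ℝ) :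
    v ⬝ᵥ ((W * Wᵀ).mulVec v) = ∑ j, (Wᵀ.mulVec v j) ^ 2 := by
  rw [← Matrix.mulVec_mulVec, ← dot_self_eq_sum_sq]
  rw [Matrix.dotProduct_mulVec, ← Matrix.mulVec_transpose]

lemma quad_ATA {m n : ℕ} (W : Matrix (Fin m) (Fin n) ℝ) (v : Fin n → ℝ) :
    v ⬝ᵥ ((Wᵀ * W).mulVec v) = ∑ i, (W.mulVec v i) ^ 2 := by
  have := quad_AAT Wᵀ v
  rwa [Matrix.transpose_transpose] at this

lemma star_triv {k : ℕ} (v : Fin k → ℝ) : (star v : Fin k → ℝ) = v := by funext i; simp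

lemma psd_one_sub_AAT {m n : ℕ} (W : Matrix (Fin m) (Fin n) ℝ) {c : ℝ} (hc : 0 ≤ c)
    (h : c * sigmaMax W ^ 2 ≤ 1) : ((1 : Matrix (Fin m) (Fin m) ℝ) - c • (W * Wᵀ)).PosSemidef := by
  refine Matrix.PosSemidef.of_dotProduct_mulVec_nonneg ?_ ?_
  · apply isHermitian_of_symm
    simp [Matrix.transpose_sub, Matrix.transpose_smul, Matrix.transpose_mul,
      Matrix.transpose_one, Matrix.transpose_transpose]
  · intro v
    rw [star_triv, Matrix.sub_mulVec, dotProduct_sub, Matrix.one_mulVec,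
      dot_self_eq_sum_sq, Matrix.smul_mulVec, dotProduct_smul, quad_AAT]
    have hb := sum_sq_mulVec_le Wᵀ v
    rw [sigmaMax_transpose] at hb
    have h2 : (0:ℝ) ≤ ∑ j, v j ^ 2 := Finset.sum_nonneg (fun j _ => sq_nonneg _)
    have : c * (∑ j, (Wᵀ.mulVec v j) ^ 2) ≤ c * (sigmaMax W ^ 2 * ∑ j, v j ^ 2) :=
      mul_le_mul_of_nonneg_left hb hc
    simp only [smul_eq_mul]
    nlinarith
  
lemma psd_one_sub_ATA {m n : ℕ} (W : Matrix (Fin m) (Fin n) ℝ) {c : ℝ} (hc : 0 ≤ c)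
    (h : c * sigmaMax W ^ 2 ≤ 1) : ((1 : Matrix (Fin n) (Fin n) ℝ) - c • (Wᵀ * W)).PosSemidef := by
  have := psd_one_sub_AAT Wᵀ hc (by rwa [sigmaMax_transpose])
  rwa [Matrix.transpose_transpose] at this

lemma psd_ATA_sub_smin {m n : ℕ} (W : Matrix (Fin m) (Fin n) ℝ) {c : ℝ} (hc : 0 ≤ c) :
    (c • (Wᵀ * W) - (c * sigmaMin W ^ 2) • (1 : Matrix (Fin n) (Fin n) ℝ)).PosSemidef := by
  refine Matrix.PosSemidef.of_dotProduct_mulVec_nonneg ?_ ?_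
  · apply isHermitian_of_symm
    simp [Matrix.transpose_sub, Matrix.transpose_smul, Matrix.transpose_mul,
      Matrix.transpose_one, Matrix.transpose_transpose]
  · intro v
    rw [star_triv, Matrix.sub_mulVec, dotProduct_sub, Matrix.smul_mulVec,
      dotProduct_smul, quad_ATA, Matrix.smul_mulVec, Matrix.one_mulVec,
      dotProduct_smul, dot_self_eq_sum_sq]
    have hb := sigmaMin_sq_le_quad W v
    have : c * (sigmaMin W ^ 2 * ∑ j, v j ^ 2) ≤ c * (∑ i, (W.mulVec v i) ^ 2) :=
      mul_le_mul_of_nonneg_left hb hc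
    simp only [smul_eq_mul]
    nlinarith

lemma psd_smul_AAT {m n : ℕ} (W : Matrix (Fin m) (Fin n) ℝ) {c : ℝ} (hc : 0 ≤ c) :
    (c • (W * Wᵀ)).PosSemidef := by
  refine Matrix.PosSemidef.of_dotProduct_mulVec_nonneg ?_ ?_
  · apply isHermitian_of_symm
    simp [Matrix.transpose_smul, Matrix.transpose_mul, Matrix.transpose_transpose]
  · intro v
    rw [star_triv, Matrix.smul_mulVec, dotProduct_smul, quad_AAT]
    have h2 : (0:ℝ) ≤ ∑ j, (Wᵀ.mulVec v j) ^ 2 := Finset.sum_nonneg (fun j _ => sq_nonneg _)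
    simpa using mul_nonneg hc h2

lemma main_term_bound {d r : ℕ} (W Δ : Matrix (Fin d) (Fin r) ℝ) {η : ℝ} (hη : 0 ≤ η)
    (hσL : sigmaMin W ^ 2 ≤ sigmaMax W ^ 2)
    (hL : 2 * η * sigmaMax W ^ 2 ≤ 1) :
    sigmaMax (Δ - η • (W * Wᵀ * Δ + Δ * (Wᵀ * W)))
      ≤ (1 - η * sigmaMin W ^ 2) * sigmaMax Δ := by
  have hsplit : Δ - η • (W * Wᵀ * Δ + Δ * (Wᵀ * W))
      = (2⁻¹ : ℝ) • (((1 : Matrix (Fin d) (Fin d) ℝ) - (2*η) • (W * Wᵀ)) * Δ)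
        + (2⁻¹ : ℝ) • (Δ * ((1 : Matrix (Fin r) (Fin r) ℝ) - (2*η) • (Wᵀ * W))) := by
    rw [Matrix.sub_mul, Matrix.mul_sub, Matrix.one_mul, Matrix.mul_one,
      Matrix.smul_mul, Matrix.mul_smul]
    rw [smul_sub, smul_sub, smul_smul, smul_smul]
    rw [smul_add]
    module
  rw [hsplit]
  have h2η : (0:ℝ) ≤ 2 * η := by linarith
  have hA : sigmaMax ((1 : Matrix (Fin d) (Fin d) ℝ) - (2*η) • (W * Wᵀ)) ≤ 1 := by
    apply psd_sigmaMax_le (psd_one_sub_AAT W h2η (by linarith)) (by norm_num)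
    have : (1:ℝ) • (1 : Matrix (Fin d) (Fin d) ℝ)
        - ((1 : Matrix (Fin d) (Fin d) ℝ) - (2*η) • (W * Wᵀ)) = (2*η) • (W * Wᵀ) := by
      rw [one_smul]; abel
    rw [this]
    exact psd_smul_AAT W h2η
  have hB : sigmaMax ((1 : Matrix (Fin r) (Fin r) ℝ) - (2*η) • (Wᵀ * W))
      ≤ 1 - 2 * η * sigmaMin W ^ 2 := by
    have hβ0 : (0:ℝ) ≤ 1 - 2 * η * sigmaMin W ^ 2 := by nlinarith
    apply psd_sigmaMax_le (psd_one_sub_ATA W h2η (by linarith)) hβ0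
    have : (1 - 2 * η * sigmaMin W ^ 2) • (1 : Matrix (Fin r) (Fin r) ℝ)
        - ((1 : Matrix (Fin r) (Fin r) ℝ) - (2*η) • (Wᵀ * W))
        = (2*η) • (Wᵀ * W) - ((2*η) * sigmaMin W ^ 2) • (1 : Matrix (Fin r) (Fin r) ℝ) := by
      rw [sub_smul, one_smul]
      have : ((2*η) * sigmaMin W ^ 2) • (1 : Matrix (Fin r) (Fin r) ℝ)
          = (2 * η * sigmaMin W ^ 2) • (1 : Matrix (Fin r) (Fin r) ℝ) := by ring_nf
      rw [this]; abel
    rw [this]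
    exact psd_ATA_sub_smin W h2η
  have hδ := sigmaMax_nonneg Δ
  calc sigmaMax ((2⁻¹ : ℝ) • (((1 : Matrix (Fin d) (Fin d) ℝ) - (2*η) • (W * Wᵀ)) * Δ)
        + (2⁻¹ : ℝ) • (Δ * ((1 : Matrix (Fin r) (Fin r) ℝ) - (2*η) • (Wᵀ * W))))
      ≤ sigmaMax ((2⁻¹ : ℝ) • (((1 : Matrix (Fin d) (Fin d) ℝ) - (2*η) • (W * Wᵀ)) * Δ))
        + sigmaMax ((2⁻¹ : ℝ) • (Δ * ((1 : Matrix (Fin r) (Fin r) ℝ) - (2*η) • (Wᵀ * W)))) :=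
        sigmaMax_add_le _ _
    _ = 2⁻¹ * sigmaMax (((1 : Matrix (Fin d) (Fin d) ℝ) - (2*η) • (W * Wᵀ)) * Δ)
        + 2⁻¹ * sigmaMax (Δ * ((1 : Matrix (Fin r) (Fin r) ℝ) - (2*η) • (Wᵀ * W))) := by
        rw [sigmaMax_smul, sigmaMax_smul, abs_of_pos (by norm_num : (0:ℝ) < 2⁻¹)]
    _ ≤ 2⁻¹ * (1 * sigmaMax Δ) + 2⁻¹ * (sigmaMax Δ * (1 - 2 * η * sigmaMin W ^ 2)) := by
        apply add_le_add
        · apply mul_le_mul_of_nonneg_left _ (by norm_num)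
          calc sigmaMax (((1 : Matrix (Fin d) (Fin d) ℝ) - (2*η) • (W * Wᵀ)) * Δ)
              ≤ sigmaMax ((1 : Matrix (Fin d) (Fin d) ℝ) - (2*η) • (W * Wᵀ)) * sigmaMax Δ :=
                sigmaMax_mul_le _ _
            _ ≤ 1 * sigmaMax Δ := mul_le_mul_of_nonneg_right hA hδ
        · apply mul_le_mul_of_nonneg_left _ (by norm_num)
          calc sigmaMax (Δ * ((1 : Matrix (Fin r) (Fin r) ℝ) - (2*η) • (Wᵀ * W)))
              ≤ sigmaMax Δ * sigmaMax ((1 : Matrix (Fin r) (Fin r) ℝ) - (2*η) • (Wᵀ * W)) :=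
                sigmaMax_mul_le _ _
            _ ≤ sigmaMax Δ * (1 - 2 * η * sigmaMin W ^ 2) := mul_le_mul_of_nonneg_left hB hδ
    _ = (1 - η * sigmaMin W ^ 2) * sigmaMax Δ := by ring

lemma skew_dot {r : ℕ} {K : Matrix (Fin r) (Fin r) ℝ} (hK : Kᵀ = -K) (x : Fin r → ℝ) :
    x ⬝ᵥ (K.mulVec x) = 0 := by
  have h : x ⬝ᵥ (K.mulVec x) = (Kᵀ.mulVec x) ⬝ᵥ x := by
    rw [Matrix.dotProduct_mulVec, ← Matrix.mulVec_transpose]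
  rw [hK, Matrix.neg_mulVec, neg_dotProduct, dotProduct_comm] at h
  have h2 : (K.mulVec x) ⬝ᵥ x = 0 := by linarith
  rw [dotProduct_comm]
  exact h2

lemma cayley {r : ℕ} (K : Matrix (Fin r) (Fin r) ℝ) (hK : Kᵀ = -K) (η : ℝ) :
    ∃ S : Matrix (Fin r) (Fin r) ℝ, Sᵀ * S = 1 ∧ S * Sᵀ = 1 ∧
      sigmaMax (S - (1 - (2*η) • K)) ≤ 2 * η^2 * sigmaMax K ^ 2 := by
  classical
  set A : Matrix (Fin r) (Fin r) ℝ := 1 + η • K with hA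
  have hAt : Aᵀ = 1 - η • K := by
    rw [hA, Matrix.transpose_add, Matrix.transpose_one, Matrix.transpose_smul, hK, smul_neg]
    abel
  -- A is invertible
  have hPD : (Aᵀ * A).PosDef := by
    refine Matrix.PosDef.of_dotProduct_mulVec_pos ?_ ?_
    · apply isHermitian_of_symm
      rw [Matrix.transpose_mul, Matrix.transpose_transpose]
    · intro v hv
      rw [star_triv, ← Matrix.mulVec_mulVec, Matrix.dotProduct_mulVec, ← Matrix.mulVec_transpose,
        Matrix.transpose_transpose, dot_self_eq_sum_sq]
      have hAv : A.mulVec v = v + η • K.mulVec v := by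
        rw [hA, Matrix.add_mulVec, Matrix.one_mulVec, Matrix.smul_mulVec]
      have hexp : (∑ i, (A.mulVec v i) ^ 2)
          = (∑ i, v i ^ 2) + 2 * η * (v ⬝ᵥ (K.mulVec v)) + η ^ 2 * ∑ i, (K.mulVec v i) ^ 2 := by
        rw [hAv]
        simp only [Pi.add_apply, Pi.smul_apply, smul_eq_mul]
        rw [Finset.sum_congr rfl (fun i _ => by ring :
          ∀ i ∈ Finset.univ, (v i + η * K.mulVec v i) ^ 2
            = v i ^ 2 + 2 * η * (v i * K.mulVec v i) + η ^ 2 * (K.mulVec v i) ^ 2)]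
        rw [Finset.sum_add_distrib, Finset.sum_add_distrib, ← Finset.mul_sum, ← Finset.mul_sum]
        rfl
      rw [hexp, skew_dot hK, mul_zero]
      have hv2 : 0 < ∑ i, v i ^ 2 := by
        rcases lt_or_eq_of_le (Finset.sum_nonneg (fun j _ => sq_nonneg (v j))) with h | h
        · exact h
        · exact absurd ((sum_sq_eq_zero_iff v).mp h.symm) hv
      have : (0:ℝ) ≤ η ^ 2 * ∑ i, (K.mulVec v i) ^ 2 := by positivity
      linarith
  have hdet : IsUnit A.det := by
    have h1 : 0 < (Aᵀ * A).det := hPD.det_pos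
    rw [Matrix.det_mul, Matrix.det_transpose] at h1
    exact isUnit_iff_ne_zero.mpr (by nlinarith)
  have hAAi : A * A⁻¹ = 1 := Matrix.mul_nonsing_inv A hdet
  have hAiA : A⁻¹ * A = 1 := Matrix.nonsing_inv_mul A hdet
  set S : Matrix (Fin r) (Fin r) ℝ := (1 - η • K) * A⁻¹ with hS
  have hdetT : IsUnit (1 - η • K).det := by rw [← hAt, Matrix.det_transpose]; exact hdet
  have hcomm : (1 + η • K) * (1 - η • K) = (1 - η • K) * (1 + η • K) := by
    noncomm_ring
    module
  have hSt : Sᵀ = (1 - η • K)⁻¹ * (1 + η • K) := by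
    rw [hS, Matrix.transpose_mul, Matrix.transpose_nonsing_inv, hAt]
    congr 1
    rw [Matrix.transpose_sub, Matrix.transpose_one, Matrix.transpose_smul, hK, smul_neg]
    abel
  have horth1 : Sᵀ * S = 1 := by
    rw [hSt, hS]
    have : (1 + η • K) * ((1 - η • K) * A⁻¹) = A⁻¹ * A * ((1 + η • K) * ((1 - η • K) * A⁻¹)) := by
      rw [hAiA, Matrix.one_mul]
    calc (1 - η • K)⁻¹ * (1 + η • K) * ((1 - η • K) * A⁻¹)
        = (1 - η • K)⁻¹ * ((1 + η • K) * (1 - η • K)) * A⁻¹ := by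
          rw [Matrix.mul_assoc, Matrix.mul_assoc, Matrix.mul_assoc]
      _ = (1 - η • K)⁻¹ * ((1 - η • K) * (1 + η • K)) * A⁻¹ := by rw [hcomm]
      _ = ((1 - η • K)⁻¹ * (1 - η • K)) * ((1 + η • K) * A⁻¹) := by
          rw [Matrix.mul_assoc, Matrix.mul_assoc, Matrix.mul_assoc]
      _ = 1 * (A * A⁻¹) := by rw [Matrix.nonsing_inv_mul _ hdetT, ← hA]
      _ = 1 := by rw [Matrix.one_mul, hAAi]
  have horth2 : S * Sᵀ = 1 := mul_eq_one_comm.mp horth1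
  refine ⟨S, horth1, horth2, ?_⟩
  -- error formula
  have hE : S - (1 - (2*η) • K) = ((2*η^2) • (K * K)) * A⁻¹ := by
    have h1 : (1 - (2*η) • K) = ((1 - (2*η) • K) * A) * A⁻¹ := by
      rw [Matrix.mul_assoc, hAAi, Matrix.mul_one]
    rw [hS, h1, ← Matrix.sub_mul]
    congr 1
    rw [hA, Matrix.mul_add, Matrix.mul_one, Matrix.sub_mul, Matrix.one_mul,
      Matrix.smul_mul, Matrix.mul_smul, smul_smul]
    module
  -- norm of A⁻¹ is at most 1
  have hAinv : sigmaMax A⁻¹ ≤ 1 := by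
    apply sigmaMax_le_of_bound _ 1 (by norm_num)
    intro y
    set x := A⁻¹.mulVec y with hx
    have hxy : A.mulVec x = y := by
      rw [hx, Matrix.mulVec_mulVec, hAAi, Matrix.one_mulVec]
    have hAv : A.mulVec x = x + η • K.mulVec x := by
      rw [hA, Matrix.add_mulVec, Matrix.one_mulVec, Matrix.smul_mulVec]
    have hexp : (∑ i, (A.mulVec x i) ^ 2)
        = (∑ i, x i ^ 2) + 2 * η * (x ⬝ᵥ (K.mulVec x)) + η ^ 2 * ∑ i, (K.mulVec x i) ^ 2 := by
      rw [hAv]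
      simp only [Pi.add_apply, Pi.smul_apply, smul_eq_mul]
      rw [Finset.sum_congr rfl (fun i _ => by ring :
        ∀ i ∈ Finset.univ, (x i + η * K.mulVec x i) ^ 2
          = x i ^ 2 + 2 * η * (x i * K.mulVec x i) + η ^ 2 * (K.mulVec x i) ^ 2)]
      rw [Finset.sum_add_distrib, Finset.sum_add_distrib, ← Finset.mul_sum, ← Finset.mul_sum]
      rfl
    rw [skew_dot hK, mul_zero] at hexp
    have hle : (∑ i, x i ^ 2) ≤ ∑ i, y i ^ 2 := by
      rw [← hxy, hexp]
      have : (0:ℝ) ≤ η ^ 2 * ∑ i, (K.mulVec x i) ^ 2 := by positivity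
      linarith
    rw [one_mul]
    exact Real.sqrt_le_sqrt hle
  rw [hE]
  calc sigmaMax (((2*η^2) • (K * K)) * A⁻¹)
      ≤ sigmaMax ((2*η^2) • (K * K)) * sigmaMax A⁻¹ := sigmaMax_mul_le _ _
    _ ≤ sigmaMax ((2*η^2) • (K * K)) * 1 :=
        mul_le_mul_of_nonneg_left hAinv (sigmaMax_nonneg _)
    _ = |2*η^2| * sigmaMax (K * K) := by rw [mul_one, sigmaMax_smul]
    _ ≤ 2*η^2 * (sigmaMax K * sigmaMax K) := by
        rw [abs_of_nonneg (by positivity)]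
        exact mul_le_mul_of_nonneg_left (sigmaMax_mul_le K K) (by positivity)
    _ = 2 * η^2 * sigmaMax K ^ 2 := by ring


lemma key_identity {d r : ℕ} (W Δ : Matrix (Fin d) (Fin r) ℝ)
    (Es K : Matrix (Fin r) (Fin r) ℝ) (η : ℝ)
    (hK : K = (2⁻¹ : ℝ) • (Wᵀ * Δ - Δᵀ * W)) :
    ((W + Δ) - η • ((((W + Δ) * (W + Δ)ᵀ - W * Wᵀ) * (W + Δ)))) * (Es + (1 - (2*η) • K)) - W
    = (Δ - η • (W * Wᵀ * Δ + Δ * (Wᵀ * W)))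
      - η • ((2:ℝ) • (Δ * Wᵀ * Δ) + W * Δᵀ * Δ + Δ * Δᵀ * Δ)
      + (2*η^2) • ((((W + Δ) * (W + Δ)ᵀ - W * Wᵀ) * (W + Δ)) * K)
      + ((W + Δ) - η • ((((W + Δ) * (W + Δ)ᵀ - W * Wᵀ) * (W + Δ)))) * Es := by
  subst hK
  simp only [Matrix.transpose_add, Matrix.mul_add, Matrix.add_mul, Matrix.sub_mul,
    Matrix.mul_sub, Matrix.mul_smul, Matrix.smul_mul, Matrix.mul_one, Matrix.one_mul,
    smul_sub, smul_add, smul_smul, Matrix.mul_assoc]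
  module

set_option maxHeartbeats 2000000 in
lemma budget (L σ δ η : ℝ) (hL : 0 < L) (hσ : 0 ≤ σ) (hσL : σ ≤ L) (hδ0 : 0 ≤ δ)
    (hδ1 : L * δ ≤ (21/100) * σ^2) (hδ2 : δ ≤ (21/100)*L) (hη : 0 < η)
    (ht : η * L^2 ≤ 1/25) :
    η*(3*L*δ^2 + δ^3) + 2*η^2*(2*L*δ+δ^2)*(L+δ)*(L*δ)
      + (L+δ+η*(2*L*δ+δ^2)*(L+δ))*(2*η^2*L^2*δ^2) ≤ (3/4)*η*σ^2*δ := by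
  have hη' : (0:ℝ) ≤ η := le_of_lt hη
  have hδ1' : 0 ≤ L * δ := by positivity
  have h1 : η*(3*L*δ^2 + δ^3) ≤ (321/100) * η * (L*δ) * δ := by
    nlinarith [mul_le_mul_of_nonneg_left hδ2 (show (0:ℝ) ≤ η*δ^2 by positivity)]
  have h2 : (321/100)*η*(L*δ)*δ ≤ (321/100)*(21/100)*η*σ^2*δ := by
    nlinarith [mul_le_mul_of_nonneg_left hδ1 (show (0:ℝ) ≤ (321/100)*η*δ by positivity)]
  have hq : 2*L*δ+δ^2 ≤ (221/100) * (L*δ) := by nlinarith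
  have hp : L + δ ≤ (121/100) * L := by linarith
  have hq0 : (0:ℝ) ≤ 2*L*δ+δ^2 := by positivity
  have hp0 : (0:ℝ) ≤ L + δ := by positivity
  have m1 : (2*L*δ+δ^2)*(L+δ) ≤ ((221/100)*(L*δ))*((121/100)*L) :=
    mul_le_mul hq hp hp0 (by positivity)
  have h3 : 2*η^2*(2*L*δ+δ^2)*(L+δ)*(L*δ)
      ≤ 2*η^2*(((221/100)*(L*δ))*((121/100)*L))*(L*δ) := by
    nlinarith [mul_le_mul_of_nonneg_left m1 (show (0:ℝ) ≤ 2*η^2*(L*δ) by positivity)]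
  have hb : η*(L*δ)*δ ≤ (21/100)*(η*σ^2*δ) := by
    nlinarith [mul_le_mul_of_nonneg_left hδ1 (show (0:ℝ) ≤ η*δ by positivity)]
  have hbn : (0:ℝ) ≤ η*(L*δ)*δ := by positivity
  have hkey : η^2*L^3*δ^2 ≤ (1/25)*((21/100)*(η*σ^2*δ)) := by
    have e : η^2*L^3*δ^2 = (η*L^2)*(η*(L*δ)*δ) := by ring
    rw [e]
    exact mul_le_mul ht hb hbn (by norm_num)
  have h3' : 2*η^2*(((221/100)*(L*δ))*((121/100)*L))*(L*δ)
      ≤ (53482/10000) * ((1/25)*((21/100)*(η*σ^2*δ))) := by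
    nlinarith [mul_le_mul_of_nonneg_left hkey (show (0:ℝ) ≤ (53482/10000) by norm_num)]
  have hG : η*((2*L*δ+δ^2)*(L+δ)) ≤ (221/100)*(121/100)*(1/25)*δ := by
    have s1 := mul_le_mul_of_nonneg_left m1 hη'
    have s2 : η*(((221/100)*(L*δ))*((121/100)*L)) = (221/100)*(121/100)*((η*L^2)*δ) := by ring
    have s3 : (η*L^2)*δ ≤ (1/25)*δ := mul_le_mul_of_nonneg_right ht hδ0
    calc η*((2*L*δ+δ^2)*(L+δ)) ≤ η*(((221/100)*(L*δ))*((121/100)*L)) := s1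
      _ = (221/100)*(121/100)*((η*L^2)*δ) := s2
      _ ≤ (221/100)*(121/100)*((1/25)*δ) := mul_le_mul_of_nonneg_left s3 (by norm_num)
      _ = (221/100)*(121/100)*(1/25)*δ := by ring
  have hpre : L+δ+η*((2*L*δ+δ^2)*(L+δ)) ≤ (124/100)*L := by
    nlinarith [hG, hδ2]
  have h5 : (L+δ+η*((2*L*δ+δ^2)*(L+δ)))*(2*η^2*L^2*δ^2) ≤ (124/100)*L*(2*η^2*L^2*δ^2) := by
    have hx : (0:ℝ) ≤ 2*η^2*L^2*δ^2 := by positivity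
    exact mul_le_mul_of_nonneg_right hpre hx
  have h6 : (124/100)*L*(2*η^2*L^2*δ^2) ≤ (248/100) * ((1/25)*((21/100)*(η*σ^2*δ))) := by
    nlinarith [mul_le_mul_of_nonneg_left hkey (show (0:ℝ) ≤ (248/100) by norm_num)]
  have e2 : (L+δ+η*(2*L*δ+δ^2)*(L+δ))*(2*η^2*L^2*δ^2)
      = (L+δ+η*((2*L*δ+δ^2)*(L+δ)))*(2*η^2*L^2*δ^2) := by ring
  rw [e2]
  linarith [h1, h2, h3, h3', h5, h6]


lemma sigmaMax_sub_le {m n : ℕ} (X Y : Matrix (Fin m) (Fin n) ℝ) :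
    sigmaMax (X - Y) ≤ sigmaMax X + sigmaMax Y := by
  rw [sub_eq_add_neg]
  calc sigmaMax (X + -Y) ≤ sigmaMax X + sigmaMax (-Y) := sigmaMax_add_le _ _
    _ = sigmaMax X + sigmaMax Y := by rw [sigmaMax_neg]

lemma sigmaMax_mul3_le {a b c e : ℕ} (X : Matrix (Fin a) (Fin b) ℝ)
    (Y : Matrix (Fin b) (Fin c) ℝ) (Z : Matrix (Fin c) (Fin e) ℝ) :
    sigmaMax (X * Y * Z) ≤ sigmaMax X * sigmaMax Y * sigmaMax Z := by
  calc sigmaMax (X * Y * Z) ≤ sigmaMax (X * Y) * sigmaMax Z := sigmaMax_mul_le _ _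
    _ ≤ sigmaMax X * sigmaMax Y * sigmaMax Z :=
        mul_le_mul_of_nonneg_right (sigmaMax_mul_le _ _) (sigmaMax_nonneg _)

set_option maxHeartbeats 2000000 in
lemma core_contraction {d r : ℕ} (W Δ : Matrix (Fin d) (Fin r) ℝ) (η : ℝ)
    (hr : 0 < r) (hη0 : 0 < η)
    (hηL : η * sigmaMax W ^ 2 ≤ 1/25)
    (hL0 : 0 < sigmaMax W)
    (hδc : sigmaMax W * sigmaMax Δ ≤ (21/100) * sigmaMin W ^ 2) :
    ∃ S : Matrix (Fin r) (Fin r) ℝ, Sᵀ * S = 1 ∧ S * Sᵀ = 1 ∧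
      sigmaMax (((W + Δ) - η • (((W + Δ) * (W + Δ)ᵀ - W * Wᵀ) * (W + Δ))) * S - W)
        ≤ (1 - η * sigmaMin W ^ 2 / 4) * sigmaMax Δ := by
  have hδ0 : 0 ≤ sigmaMax Δ := sigmaMax_nonneg Δ
  have hσ0 : 0 ≤ sigmaMin W := sigmaMin_nonneg hr W
  have hσL : sigmaMin W ≤ sigmaMax W := sigmaMin_le_sigmaMax hr W
  have hσL2 : sigmaMin W ^ 2 ≤ sigmaMax W ^ 2 := by nlinarith
  have hδ2 : sigmaMax Δ ≤ (21/100) * sigmaMax W := by nlinarith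
  set K : Matrix (Fin r) (Fin r) ℝ := (2⁻¹ : ℝ) • (Wᵀ * Δ - Δᵀ * W) with hKdef
  have hskew : Kᵀ = -K := by
    rw [hKdef, Matrix.transpose_smul, Matrix.transpose_sub, Matrix.transpose_mul,
      Matrix.transpose_mul, Matrix.transpose_transpose, Matrix.transpose_transpose]
    rw [← smul_neg]
    congr 1
    abel
  have hKnorm : sigmaMax K ≤ sigmaMax W * sigmaMax Δ := by
    rw [hKdef, sigmaMax_smul, abs_of_pos (by norm_num : (0:ℝ) < 2⁻¹)]
    have h1 : sigmaMax (Wᵀ * Δ - Δᵀ * W) ≤ sigmaMax (Wᵀ * Δ) + sigmaMax (Δᵀ * W) :=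
      sigmaMax_sub_le _ _
    have h2 : sigmaMax (Wᵀ * Δ) ≤ sigmaMax W * sigmaMax Δ := by
      calc sigmaMax (Wᵀ * Δ) ≤ sigmaMax Wᵀ * sigmaMax Δ := sigmaMax_mul_le _ _
        _ = sigmaMax W * sigmaMax Δ := by rw [sigmaMax_transpose]
    have h3 : sigmaMax (Δᵀ * W) ≤ sigmaMax W * sigmaMax Δ := by
      calc sigmaMax (Δᵀ * W) ≤ sigmaMax Δᵀ * sigmaMax W := sigmaMax_mul_le _ _
        _ = sigmaMax W * sigmaMax Δ := by rw [sigmaMax_transpose]; ring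
    linarith
  obtain ⟨S, hS1, hS2, hSE⟩ := cayley K hskew η
  refine ⟨S, hS1, hS2, ?_⟩
  set Es : Matrix (Fin r) (Fin r) ℝ := S - (1 - (2*η) • K) with hEsdef
  have hSeq : S = Es + (1 - (2*η) • K) := by rw [hEsdef]; abel
  rw [hSeq, key_identity W Δ Es K η hKdef]
  -- abbreviations
  set L := sigmaMax W
  set σm := sigmaMin W
  set δ := sigmaMax Δ
  set G : Matrix (Fin d) (Fin r) ℝ := ((W + Δ) * (W + Δ)ᵀ - W * Wᵀ) * (W + Δ) with hGdef
  set Main : Matrix (Fin d) (Fin r) ℝ := Δ - η • (W * Wᵀ * Δ + Δ * (Wᵀ * W)) with hMainDef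
  set E₂ : Matrix (Fin d) (Fin r) ℝ := (2:ℝ) • (Δ * Wᵀ * Δ) + W * Δᵀ * Δ + Δ * Δᵀ * Δ with hE2def
  set F : Matrix (Fin d) (Fin r) ℝ := (W + Δ) - η • G with hFdef
  -- component bounds
  have hMain : sigmaMax Main ≤ (1 - η * σm ^ 2) * δ :=
    main_term_bound W Δ (le_of_lt hη0) hσL2 (by linarith)
  have hΔt : sigmaMax Δᵀ = δ := sigmaMax_transpose Δ
  have hWt : sigmaMax Wᵀ = L := sigmaMax_transpose W
  have hE2 : sigmaMax E₂ ≤ 3 * L * δ^2 + δ^3 := by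
    rw [hE2def]
    have b1 : sigmaMax ((2:ℝ) • (Δ * Wᵀ * Δ)) ≤ 2 * (δ * L * δ) := by
      rw [sigmaMax_smul, abs_of_pos (by norm_num : (0:ℝ) < 2)]
      have := sigmaMax_mul3_le Δ Wᵀ Δ
      rw [hWt] at this
      linarith
    have b2 : sigmaMax (W * Δᵀ * Δ) ≤ L * δ * δ := by
      have := sigmaMax_mul3_le W Δᵀ Δ
      rwa [hΔt] at this
    have b3 : sigmaMax (Δ * Δᵀ * Δ) ≤ δ * δ * δ := by
      have := sigmaMax_mul3_le Δ Δᵀ Δ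
      rwa [hΔt] at this
    calc sigmaMax ((2:ℝ) • (Δ * Wᵀ * Δ) + W * Δᵀ * Δ + Δ * Δᵀ * Δ)
        ≤ sigmaMax ((2:ℝ) • (Δ * Wᵀ * Δ) + W * Δᵀ * Δ) + sigmaMax (Δ * Δᵀ * Δ) :=
          sigmaMax_add_le _ _
      _ ≤ sigmaMax ((2:ℝ) • (Δ * Wᵀ * Δ)) + sigmaMax (W * Δᵀ * Δ) + sigmaMax (Δ * Δᵀ * Δ) := by
          have := sigmaMax_add_le ((2:ℝ) • (Δ * Wᵀ * Δ)) (W * Δᵀ * Δ)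
          linarith
      _ ≤ 2 * (δ * L * δ) + L * δ * δ + δ * δ * δ := by linarith
      _ = 3 * L * δ^2 + δ^3 := by ring
  have hVV : (W + Δ) * (W + Δ)ᵀ - W * Wᵀ = W * Δᵀ + Δ * Wᵀ + Δ * Δᵀ := by
    rw [Matrix.transpose_add, Matrix.mul_add, Matrix.add_mul, Matrix.add_mul]
    abel
  have hVVn : sigmaMax ((W + Δ) * (W + Δ)ᵀ - W * Wᵀ) ≤ 2 * L * δ + δ^2 := by
    rw [hVV]
    have b1 : sigmaMax (W * Δᵀ) ≤ L * δ := by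
      have := sigmaMax_mul_le W Δᵀ; rwa [hΔt] at this
    have b2 : sigmaMax (Δ * Wᵀ) ≤ δ * L := by
      have := sigmaMax_mul_le Δ Wᵀ; rwa [hWt] at this
    have b3 : sigmaMax (Δ * Δᵀ) ≤ δ * δ := by
      have := sigmaMax_mul_le Δ Δᵀ; rwa [hΔt] at this
    calc sigmaMax (W * Δᵀ + Δ * Wᵀ + Δ * Δᵀ)
        ≤ sigmaMax (W * Δᵀ + Δ * Wᵀ) + sigmaMax (Δ * Δᵀ) := sigmaMax_add_le _ _
      _ ≤ sigmaMax (W * Δᵀ) + sigmaMax (Δ * Wᵀ) + sigmaMax (Δ * Δᵀ) := by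
          have := sigmaMax_add_le (W * Δᵀ) (Δ * Wᵀ); linarith
      _ ≤ L * δ + δ * L + δ * δ := by linarith
      _ = 2 * L * δ + δ^2 := by ring
  have hVn : sigmaMax (W + Δ) ≤ L + δ := sigmaMax_add_le W Δ
  have hGn : sigmaMax G ≤ (2 * L * δ + δ^2) * (L + δ) := by
    rw [hGdef]
    calc sigmaMax (((W + Δ) * (W + Δ)ᵀ - W * Wᵀ) * (W + Δ))
        ≤ sigmaMax ((W + Δ) * (W + Δ)ᵀ - W * Wᵀ) * sigmaMax (W + Δ) := sigmaMax_mul_le _ _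
      _ ≤ (2 * L * δ + δ^2) * (L + δ) := by
          apply mul_le_mul hVVn hVn (sigmaMax_nonneg _) (by positivity)
  have hFn : sigmaMax F ≤ (L + δ) + η * ((2 * L * δ + δ^2) * (L + δ)) := by
    rw [hFdef]
    calc sigmaMax ((W + Δ) - η • G) ≤ sigmaMax (W + Δ) + sigmaMax (η • G) :=
          sigmaMax_sub_le _ _
      _ = sigmaMax (W + Δ) + η * sigmaMax G := by
          rw [sigmaMax_smul, abs_of_pos hη0]
      _ ≤ (L + δ) + η * ((2 * L * δ + δ^2) * (L + δ)) := by
          have := mul_le_mul_of_nonneg_left hGn (le_of_lt hη0)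
          linarith
  have hEsn : sigmaMax Es ≤ 2 * η^2 * (L * δ)^2 := by
    calc sigmaMax Es ≤ 2 * η^2 * sigmaMax K ^ 2 := hSE
      _ ≤ 2 * η^2 * (L * δ)^2 := by
          have hK0 := sigmaMax_nonneg K
          have : sigmaMax K ^ 2 ≤ (L * δ)^2 := by nlinarith
          nlinarith [sq_nonneg η]
  -- triangle inequality over the four pieces
  have htri : sigmaMax (Main - η • E₂ + (2*η^2) • (G * K) + F * Es)
      ≤ sigmaMax Main + η * sigmaMax E₂ + 2 * η^2 * (sigmaMax G * sigmaMax K)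
        + sigmaMax F * sigmaMax Es := by
    have t1 : sigmaMax (Main - η • E₂ + (2*η^2) • (G * K) + F * Es)
        ≤ sigmaMax (Main - η • E₂ + (2*η^2) • (G * K)) + sigmaMax (F * Es) :=
      sigmaMax_add_le _ _
    have t2 : sigmaMax (Main - η • E₂ + (2*η^2) • (G * K))
        ≤ sigmaMax (Main - η • E₂) + sigmaMax ((2*η^2) • (G * K)) := sigmaMax_add_le _ _
    have t3 : sigmaMax (Main - η • E₂) ≤ sigmaMax Main + sigmaMax (η • E₂) :=
      sigmaMax_sub_le _ _
    have t4 : sigmaMax (η • E₂) = η * sigmaMax E₂ := by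
      rw [sigmaMax_smul, abs_of_pos hη0]
    have t5 : sigmaMax ((2*η^2) • (G * K)) ≤ 2 * η^2 * (sigmaMax G * sigmaMax K) := by
      rw [sigmaMax_smul, abs_of_nonneg (by positivity : (0:ℝ) ≤ 2*η^2)]
      have := sigmaMax_mul_le G K
      nlinarith [sq_nonneg η]
    have t6 : sigmaMax (F * Es) ≤ sigmaMax F * sigmaMax Es := sigmaMax_mul_le _ _
    linarith
  -- assemble
  have hKn0 : 0 ≤ sigmaMax K := sigmaMax_nonneg K
  have hGn0 : 0 ≤ sigmaMax G := sigmaMax_nonneg G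
  have hFn0 : 0 ≤ sigmaMax F := sigmaMax_nonneg F
  have hEsn0 : 0 ≤ sigmaMax Es := sigmaMax_nonneg Es
  have hb2 : η * sigmaMax E₂ ≤ η * (3 * L * δ^2 + δ^3) :=
    mul_le_mul_of_nonneg_left hE2 (le_of_lt hη0)
  have hb3 : 2 * η^2 * (sigmaMax G * sigmaMax K)
      ≤ 2 * η^2 * ((2 * L * δ + δ^2) * (L + δ) * (L * δ)) := by
    have : sigmaMax G * sigmaMax K ≤ (2 * L * δ + δ^2) * (L + δ) * (L * δ) :=
      mul_le_mul hGn hKnorm hKn0 (by positivity)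
    nlinarith [sq_nonneg η]
  have hb4 : sigmaMax F * sigmaMax Es
      ≤ ((L + δ) + η * ((2 * L * δ + δ^2) * (L + δ))) * (2 * η^2 * (L * δ)^2) :=
    mul_le_mul hFn hEsn hEsn0 (by positivity)
  have hbudget := budget L σm δ η hL0 hσ0 hσL hδ0 hδc hδ2 hη0 hηL
  have hfinal : sigmaMax Main + η * sigmaMax E₂ + 2 * η^2 * (sigmaMax G * sigmaMax K)
      + sigmaMax F * sigmaMax Es ≤ (1 - η * σm ^ 2 / 4) * δ := by
    have e1 : 2 * η^2 * ((2 * L * δ + δ^2) * (L + δ) * (L * δ))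
        = 2*η^2*(2*L*δ+δ^2)*(L+δ)*(L*δ) := by ring
    have e2 : ((L + δ) + η * ((2 * L * δ + δ^2) * (L + δ))) * (2 * η^2 * (L * δ)^2)
        = (L+δ+η*(2*L*δ+δ^2)*(L+δ))*(2*η^2*L^2*δ^2) := by ring
    have e3 : η * (3 * L * δ^2 + δ^3) = η*(3*L*δ^2 + δ^3) := by ring
    nlinarith [hMain, hb2, hb3, hb4, hbudget]
  linarith


lemma sigmaMax_of_zero_cols {m : ℕ} (M : Matrix (Fin m) (Fin 0) ℝ) : sigmaMax M = 0 := by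
  rw [sigmaMax_eq_norm]
  have hM : M = 0 := by ext i j; exact j.elim0
  rw [hM, norm_zero]


lemma distO_mem_one {d r : ℕ} (V W : Matrix (Fin d) (Fin r) ℝ) :
    sigmaMax (V - W) ∈ {x | ∃ R : Matrix (Fin r) (Fin r) ℝ,
      Rᵀ * R = 1 ∧ R * Rᵀ = 1 ∧ x = sigmaMax (V * R - W)} :=
  ⟨1, by rw [Matrix.transpose_one, Matrix.one_mul], by rw [Matrix.transpose_one, Matrix.one_mul],
    by rw [Matrix.mul_one]⟩

lemma distO_bddBelow {d r : ℕ} (V W : Matrix (Fin d) (Fin r) ℝ) :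
    BddBelow {x | ∃ R : Matrix (Fin r) (Fin r) ℝ,
      Rᵀ * R = 1 ∧ R * Rᵀ = 1 ∧ x = sigmaMax (V * R - W)} := by
  refine ⟨0, fun x hx => ?_⟩
  obtain ⟨R, -, -, rfl⟩ := hx
  exact sigmaMax_nonneg _

lemma distO_le {d r : ℕ} (V W : Matrix (Fin d) (Fin r) ℝ) (R : Matrix (Fin r) (Fin r) ℝ)
    (h1 : Rᵀ * R = 1) (h2 : R * Rᵀ = 1) : distO V W ≤ sigmaMax (V * R - W) :=
  csInf_le (distO_bddBelow V W) ⟨R, h1, h2, rfl⟩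

lemma distO_zero_cols {d : ℕ} (V W : Matrix (Fin d) (Fin 0) ℝ) : distO V W = 0 := by
  have hall : ∀ x ∈ {x | ∃ R : Matrix (Fin 0) (Fin 0) ℝ,
      Rᵀ * R = 1 ∧ R * Rᵀ = 1 ∧ x = sigmaMax (V * R - W)}, x = 0 := by
    rintro x ⟨R, -, -, rfl⟩
    exact sigmaMax_of_zero_cols _
  have hmem := distO_mem_one V W
  have h0 : sigmaMax (V - W) = 0 := sigmaMax_of_zero_cols _
  apply le_antisymm
  · have := csInf_le (distO_bddBelow V W) hmem
    rw [h0] at this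
    exact this
  · apply le_csInf ⟨_, hmem⟩
    intro x hx
    rw [hall x hx]

lemma sigmaMax_eq_zero_of_le {m n : ℕ} {M : Matrix (Fin m) (Fin n) ℝ}
    (h : sigmaMax M ≤ 0) : M = 0 := by
  rw [sigmaMax_eq_norm] at h
  exact norm_eq_zero.mp (le_antisymm h (norm_nonneg _))

/-- One-step contraction of gradient descent for symmetric low-rank factorization
(noiseless, aligned case). -/
theorem gd_one_step_contraction {d r : ℕ} (W V : Matrix (Fin d) (Fin r) ℝ)
    (hrank : W.rank = r)
    (M : Matrix (Fin d) (Fin d) ℝ) (hM : M = W * Wᵀ)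
    (hclose : sigmaMax (V - W) ≤ sigmaMin W ^ 2 / (5 * sigmaMax W))
    (η : ℝ) (hη0 : 0 < η) (hη : η ≤ 1 / (25 * sigmaMax W ^ 2)) :
    distO (V - η • ((V * Vᵀ - M) * V)) W ≤ (1 - η * sigmaMin W ^ 2 / 4) * distO V W := by
  subst hM
  rcases Nat.eq_zero_or_pos r with hr | hr
  · subst hr
    rw [distO_zero_cols, distO_zero_cols, mul_zero]
  -- r > 0 from here on
  have hL0 : 0 < sigmaMax W := by
    rcases lt_or_eq_of_le (sigmaMax_nonneg W) with h | h
    · exact h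
    · exfalso
      rw [← h] at hη
      norm_num at hη
      linarith
  have hηL : η * sigmaMax W ^ 2 ≤ 1/25 := by
    rw [le_div_iff₀ (by positivity)] at hη
    nlinarith
  have hσ0 : 0 ≤ sigmaMin W := sigmaMin_nonneg hr W
  have hσL : sigmaMin W ≤ sigmaMax W := sigmaMin_le_sigmaMax hr W
  rcases lt_or_eq_of_le hσ0 with hσpos | hσzero
  swap
  · -- sigmaMin W = 0 : then V = W and both sides are equal
    have hVW : V - W = 0 := by
      apply sigmaMax_eq_zero_of_le
      rw [← hσzero] at hclose
      simpa using hclose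
    have hV : V = W := by
      have := sub_eq_zero.mp hVW
      exact this
    subst hV
    have hupd : V - η • ((V * Vᵀ - V * Vᵀ) * V) = V := by
      simp
    rw [hupd, ← hσzero]
    norm_num
  -- main case
  set L := sigmaMax W with hLdef
  set σm := sigmaMin W with hσdef
  set Vp := V - η • ((V * Vᵀ - W * Wᵀ) * V) with hVpdef
  set ρ := 1 - η * σm ^ 2 / 4 with hρdef
  have hρ0 : 0 ≤ ρ := by
    have : η * σm ^ 2 ≤ 1/25 := by
      nlinarith [mul_nonneg (mul_nonneg (le_of_lt hη0) (sub_nonneg.mpr hσL))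
        (by linarith : (0:ℝ) ≤ L + σm)]
    rw [hρdef]; linarith
  have hρ1 : ρ ≤ 1 := by
    rw [hρdef]; nlinarith
  set ε₀ := σm ^ 2 / (100 * L) with hε₀def
  have hε₀pos : 0 < ε₀ := by rw [hε₀def]; positivity
  -- key step: for every positive ε ≤ ε₀
  have hkey : ∀ ε : ℝ, 0 < ε → ε ≤ ε₀ → distO Vp W ≤ ρ * (distO V W + ε) := by
    intro ε hεpos hεle
    -- choose a near-optimal R
    have hlt : distO V W < distO V W + ε := by linarith
    have hne : {x | ∃ R : Matrix (Fin r) (Fin r) ℝ,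
        Rᵀ * R = 1 ∧ R * Rᵀ = 1 ∧ x = sigmaMax (V * R - W)}.Nonempty := ⟨_, distO_mem_one V W⟩
    obtain ⟨x, hxmem, hxlt⟩ := exists_lt_of_csInf_lt hne hlt
    obtain ⟨R, hR1, hR2, rfl⟩ := hxmem
    set Δ := V * R - W with hΔdef
    set δ := sigmaMax Δ with hδdef
    have hδd : δ < distO V W + ε := hxlt
    have hdle : distO V W ≤ sigmaMax (V - W) :=
      csInf_le (distO_bddBelow V W) (distO_mem_one V W)
    -- the closeness bound for the core lemma
    have hδc : L * δ ≤ (21/100) * σm ^ 2 := by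
      have hclose' : sigmaMax (V - W) * (5 * L) ≤ σm ^ 2 := by
        rw [le_div_iff₀ (by positivity)] at hclose
        exact hclose
      have hε' : ε * (100 * L) ≤ σm ^ 2 := by
        rw [hε₀def, le_div_iff₀ (by positivity)] at hεle
        exact hεle
      have hδle : δ ≤ sigmaMax (V - W) + ε := by linarith
      nlinarith [mul_le_mul_of_nonneg_left hδle (le_of_lt hL0)]
    obtain ⟨S, hS1, hS2, hSbound⟩ := core_contraction W Δ η hr hη0 hηL hL0 hδc
    -- identify the matrices
    have hWΔ : W + Δ = V * R := by rw [hΔdef]; abel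
    have hVVt : (V * R) * (V * R)ᵀ = V * Vᵀ := by
      rw [Matrix.transpose_mul, Matrix.mul_assoc, ← Matrix.mul_assoc R, hR2,
        Matrix.one_mul]
    have hmatch : ((W + Δ) - η • (((W + Δ) * (W + Δ)ᵀ - W * Wᵀ) * (W + Δ))) * S
        = Vp * (R * S) := by
      rw [hWΔ, hVVt, hVpdef]
      simp only [Matrix.sub_mul, Matrix.smul_mul, Matrix.mul_assoc]
    rw [hmatch] at hSbound
    -- R * S is orthogonal
    have hRS1 : (R * S)ᵀ * (R * S) = 1 := by
      rw [Matrix.transpose_mul, Matrix.mul_assoc, ← Matrix.mul_assoc Rᵀ, hR1,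
        Matrix.one_mul, hS1]
    have hRS2 : (R * S) * (R * S)ᵀ = 1 := by
      rw [Matrix.transpose_mul, Matrix.mul_assoc, ← Matrix.mul_assoc S, hS2,
        Matrix.one_mul, hR2]
    have hfin : distO Vp W ≤ sigmaMax (Vp * (R * S) - W) := distO_le Vp W (R * S) hRS1 hRS2
    calc distO Vp W ≤ sigmaMax (Vp * (R * S) - W) := hfin
      _ ≤ (1 - η * σm ^ 2 / 4) * δ := hSbound
      _ = ρ * δ := by rw [hρdef]
      _ ≤ ρ * (distO V W + ε) := mul_le_mul_of_nonneg_left (le_of_lt hδd) hρ0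
  -- pass to the limit ε → 0
  have hconc : distO Vp W ≤ ρ * distO V W := by
    apply le_of_forall_pos_le_add
    intro ε hεpos
    have hmin : 0 < min ε ε₀ := lt_min hεpos hε₀pos
    have h := hkey (min ε ε₀) hmin (min_le_right _ _)
    have h2 : ρ * (distO V W + min ε ε₀) = ρ * distO V W + ρ * min ε ε₀ := by ring
    have h3 : ρ * min ε ε₀ ≤ min ε ε₀ := by nlinarith [le_of_lt hmin]
    have h4 : min ε ε₀ ≤ ε := min_le_left _ _
    linarith
  exact hconc
end
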